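/- arXiv:2104.06156 — 6 statements merged into one kernel-verified Lean document; each statement's English description precedes it below -/
import Mathlib

section
/- Let G be a finitely generated discrete group with finite symmetric generating set S and let φ : G → Homeo(X) be an expansive continuous action of G on a compact metric space (X,d). Then there exist a real number α > 1 and a metric D on X compatible with the topology of X such that for every positive integer n and any two distinct points x, y ∈ X with D(x,y) ≥ α^{-n}, one has max_{g∈G, |g|≤n} D(gx, gy) ≥ 1/(4α). -/
open Pointwise Filter Metric Set Topology TopologicalSpace

/-- The group of self-homeomorphisms of `X`, with `(f * g) x = f (g x)`. -/
instance homeoGroup {X : Type*} [TopologicalSpace X] : Group (X ≃ₜ X) where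
  mul f g := g.trans f
  one := Homeomorph.refl X
  inv := Homeomorph.symm
  mul_assoc _ _ _ := rfl
  one_mul _ := Homeomorph.ext fun _ => rfl
  mul_one _ := Homeomorph.ext fun _ => rfl
  inv_mul_cancel f := Homeomorph.ext f.symm_apply_apply

/-- The word length of `g` with respect to the (symmetric) generating set `S`:
the least `n` such that `g` is a product of `n` elements of `S`. -/
noncomputable def wordLength {G : Type*} [Group G] (S : Set G) (g : G) : ℕ :=
  sInf {n : ℕ | g ∈ S ^ n}

/-- The growth function `β(G,S;k) = #{g ∈ G : |g| ≤ k}`. -/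
noncomputable def growthFn {G : Type*} [Group G] (S : Set G) (k : ℕ) : ℕ :=
  Set.ncard {g : G | wordLength S g ≤ k}

/-- `G` has subexponential growth w.r.t. `S`: `lim_k β(G,S;k)^{1/k} ≤ 1`. -/
def SubexpGrowth {G : Type*} [Group G] (S : Set G) : Prop :=
  Filter.limsup (fun k : ℕ => (growthFn S k : ℝ) ^ (1 / (k : ℝ))) Filter.atTop ≤ 1

/-- A continuum (here: a compact connected metric space, via instances) is Suslinian if
every family of pairwise disjoint nondegenerate subcontinua is countable. -/
def Suslinian (X : Type*) [MetricSpace X] : Prop :=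
  ∀ 𝒜 : Set (Set X), (∀ A ∈ 𝒜, IsCompact A ∧ IsConnected A ∧ A.Nontrivial) →
    𝒜.Pairwise Disjoint → 𝒜.Countable

/-! ### Auxiliary lemmas on word length -/

section WL
variable {G : Type*} [Group G] {S : Set G}

lemma wordLength_one' : wordLength S 1 = 0 := by
  have : (0:ℕ) ∈ {n : ℕ | (1:G) ∈ S ^ n} := by simp [Set.mem_one]
  exact Nat.eq_zero_of_le_zero (Nat.sInf_le this)

lemma exists_pow_mem' (hSsym : S⁻¹ = S) (hSgen : Subgroup.closure S = ⊤) (g : G) :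
    ∃ n, g ∈ S ^ n := by
  have hg : g ∈ Subgroup.closure S := by rw [hSgen]; trivial
  refine Subgroup.closure_induction (p := fun x _ => ∃ n, x ∈ S ^ n) ?_ ?_ ?_ ?_ hg
  · intro x hx; exact ⟨1, by simpa using hx⟩
  · exact ⟨0, by simp [Set.mem_one]⟩
  · rintro a b _ _ ⟨n, hn⟩ ⟨k, hk⟩
    exact ⟨n + k, by rw [pow_add]; exact Set.mul_mem_mul hn hk⟩
  · rintro a _ ⟨n, hn⟩
    refine ⟨n, ?_⟩
    have : a⁻¹ ∈ (S ^ n)⁻¹ := by simpa using hn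
    rwa [← inv_pow, hSsym] at this

lemma mem_pow_wordLength' (hSsym : S⁻¹ = S) (hSgen : Subgroup.closure S = ⊤) (g : G) :
    g ∈ S ^ wordLength S g :=
  Nat.sInf_mem (exists_pow_mem' hSsym hSgen g : ∃ n, g ∈ S ^ n)

lemma wordLength_mul_le' (hSsym : S⁻¹ = S) (hSgen : Subgroup.closure S = ⊤) (g h : G) :
    wordLength S (g * h) ≤ wordLength S g + wordLength S h := by
  apply Nat.sInf_le
  rw [Set.mem_setOf_eq, pow_add]
  exact Set.mul_mem_mul (mem_pow_wordLength' hSsym hSgen g) (mem_pow_wordLength' hSsym hSgen h)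

lemma finite_wordBall' (hSfin : S.Finite) (hSsym : S⁻¹ = S) (hSgen : Subgroup.closure S = ⊤)
    (j : ℕ) : {g : G | wordLength S g ≤ j}.Finite := by
  have hpow : ∀ n : ℕ, (S ^ n).Finite := by
    intro n
    induction n with
    | zero => simpa [Set.mem_one] using Set.finite_singleton (1:G)
    | succ n ih => rw [pow_succ]; exact ih.mul hSfin
  apply Set.Finite.subset (Set.Finite.biUnion (Set.finite_Iic j) (fun i _ => hpow i))
  intro g hg
  exact Set.mem_biUnion hg (mem_pow_wordLength' hSsym hSgen g)

end WL

/-! ### Uniform expansiveness -/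

section UE
variable {G : Type*} [Group G] (S : Set G)
  {X : Type*} [MetricSpace X] [CompactSpace X] (φ : G →* (X ≃ₜ X))

lemma phi_mul_apply' (g h : G) (x : X) : φ (g * h) x = φ g (φ h x) := by
  rw [map_mul]; rfl

lemma uniform_expansive' (c : ℝ)
    (hexp : ∀ x y : X, x ≠ y → c < ⨆ g : G, dist (φ g x) (φ g y))
    (δ : ℝ) (hδ : 0 < δ) :
    ∃ m : ℕ, ∀ x y : X, (∀ g : G, wordLength S g ≤ m → dist (φ g x) (φ g y) ≤ c) →
      dist x y ≤ δ := by
  by_contra hcon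
  push_neg at hcon
  choose a b hp1 hp2 using hcon
  obtain ⟨q, -, ψ, hψ, hlim⟩ :=
    IsCompact.tendsto_subseq (x := fun m => ((a m, b m) : X × X)) isCompact_univ
      (fun n => Set.mem_univ _)
  have hlim1 : Tendsto (fun k => a (ψ k)) atTop (nhds q.1) := (continuous_fst.tendsto q).comp hlim
  have hlim2 : Tendsto (fun k => b (ψ k)) atTop (nhds q.2) := (continuous_snd.tendsto q).comp hlim
  have hne : q.1 ≠ q.2 := by
    have hd : Tendsto (fun k => dist (a (ψ k)) (b (ψ k))) atTop (nhds (dist q.1 q.2)) :=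
      hlim1.dist hlim2
    have : δ ≤ dist q.1 q.2 :=
      le_of_tendsto_of_tendsto' tendsto_const_nhds hd (fun k => (hp2 (ψ k)).le)
    intro h; rw [h, dist_self] at this; linarith
  have hall : ∀ g : G, dist (φ g q.1) (φ g q.2) ≤ c := by
    intro g
    have hcont : Tendsto (fun k => dist (φ g (a (ψ k))) (φ g (b (ψ k)))) atTop
        (nhds (dist (φ g q.1) (φ g q.2))) :=
      (((φ g).continuous.tendsto q.1).comp hlim1).dist (((φ g).continuous.tendsto q.2).comp hlim2)
    apply le_of_tendsto hcont
    filter_upwards [eventually_ge_atTop (wordLength S g)] with k hk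
    exact hp1 (ψ k) g (le_trans hk (hψ.le_apply))
  have : (⨆ g : G, dist (φ g q.1) (φ g q.2)) ≤ c := ciSup_le hall
  exact absurd (hexp q.1 q.2 hne) (not_lt.mpr this)

end UE

/-! ### Frink-type chain construction -/

section Frink
variable {X : Type*}

lemma chain_bound' (ρ : X → X → ℝ) (hnn : ∀ x y, 0 ≤ ρ x y) (hrefl : ∀ x, ρ x x = 0)
    (K : ℝ) (hK1 : 1 ≤ K) (hK2 : K ^ 2 ≤ 2)
    (hquasi : ∀ x y z, ρ x z ≤ K * max (ρ x y) (ρ y z)) :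
    ∀ (N : ℕ) (f : ℕ → X),
      ρ (f 0) (f (N + 1)) ≤ 2 * ∑ i ∈ Finset.range (N + 1), ρ (f i) (f (i + 1)) := by
  intro N
  induction N using Nat.strong_induction_on with
  | _ N IH =>
  intro f
  classical
  set e : ℕ → ℝ := fun i => ρ (f i) (f (i + 1)) with he
  set T := ∑ i ∈ Finset.range (N + 1), e i with hT
  have hTnn : 0 ≤ T := Finset.sum_nonneg fun i _ => hnn _ _
  set P : ℕ → Prop := fun k => ∑ i ∈ Finset.range k, e i ≤ T / 2 with hPdef
  have hP0 : P 0 := by simp only [hPdef, Finset.range_zero, Finset.sum_empty]; linarith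
  set k := Nat.findGreatest P N with hk
  have hkN : k ≤ N := Nat.findGreatest_le N
  have hPk : P k := Nat.findGreatest_spec (Nat.zero_le N) hP0
  have hpre : ρ (f 0) (f k) ≤ 2 * ∑ i ∈ Finset.range k, e i := by
    rcases Nat.eq_zero_or_pos k with h0 | hpos
    · rw [h0]; simp [hrefl]
    · obtain ⟨k', hk'⟩ := Nat.exists_eq_succ_of_ne_zero (Nat.pos_iff_ne_zero.mp hpos)
      rw [hk']
      exact IH k' (by omega) f
  have hsuf : ρ (f (k + 1)) (f (N + 1)) ≤ 2 * ∑ i ∈ Finset.range (N - k), e (k + 1 + i) := by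
    rcases Nat.eq_zero_or_pos (N - k) with h0 | hpos
    · have hkN' : k = N := by omega
      rw [h0, hkN']
      simp [hrefl]
    · obtain ⟨M, hM⟩ := Nat.exists_eq_succ_of_ne_zero (Nat.pos_iff_ne_zero.mp hpos)
      rw [hM]
      have hIH := IH M (by omega) (fun i => f (k + 1 + i))
      have harg : k + 1 + (M + 1) = N + 1 := by omega
      rw [harg] at hIH
      simp at hIH; exact hIH
  have hsplit : (∑ i ∈ Finset.range (k + 1), e i)
      + ∑ i ∈ Finset.range (N - k), e (k + 1 + i) = T := by
    rw [hT]
    have h1 : ∑ i ∈ Finset.Ico (k + 1) (N + 1), e i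
        = ∑ i ∈ Finset.range (N - k), e (k + 1 + i) := by
      rw [Finset.sum_Ico_eq_sum_range]
      have h2 : N + 1 - (k + 1) = N - k := by omega
      rw [h2]
    rw [← h1, Finset.range_eq_Ico]
    rw [Finset.range_eq_Ico]
    exact Finset.sum_Ico_consecutive e (by omega : 0 ≤ k + 1) (by omega : k + 1 ≤ N + 1)
  have hsufsum : ∑ i ∈ Finset.range (N - k), e (k + 1 + i) ≤ T / 2 := by
    rcases eq_or_lt_of_le hkN with heq | hlt
    · simp [heq]; linarith
    · have hnP : ¬ P (k + 1) :=
        Nat.findGreatest_is_greatest (show Nat.findGreatest P N < k + 1 by omega)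
          (show k + 1 ≤ N by omega)
      have hgt : T / 2 < ∑ i ∈ Finset.range (k + 1), e i := by
        simpa [hPdef] using hnP
      linarith
  have hprefsum : ∑ i ∈ Finset.range k, e i ≤ T / 2 := hPk
  have hek : e k ≤ T := by
    have h := Finset.single_le_sum (f := e) (fun i _ => hnn _ _)
      (Finset.mem_range.mpr (by omega : k < N + 1))
    rw [← hT] at h; exact h
  have hpre' : ρ (f 0) (f k) ≤ T := by linarith
  have hsuf' : ρ (f (k + 1)) (f (N + 1)) ≤ T := by linarith
  have h1 : ρ (f k) (f (N + 1)) ≤ K * T := by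
    calc ρ (f k) (f (N + 1)) ≤ K * max (e k) (ρ (f (k + 1)) (f (N + 1))) :=
          hquasi _ (f (k + 1)) _
      _ ≤ K * T := mul_le_mul_of_nonneg_left (max_le hek hsuf') (by linarith)
  have h2 : ρ (f 0) (f (N + 1)) ≤ K * max (ρ (f 0) (f k)) (ρ (f k) (f (N + 1))) :=
    hquasi _ (f k) _
  have hKT : max (ρ (f 0) (f k)) (ρ (f k) (f (N + 1))) ≤ K * T :=
    max_le (le_trans hpre' (le_mul_of_one_le_left hTnn hK1)) h1
  calc ρ (f 0) (f (N + 1)) ≤ K * (K * T) :=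
        le_trans h2 (mul_le_mul_of_nonneg_left hKT (by linarith))
    _ = K ^ 2 * T := by ring
    _ ≤ 2 * T := mul_le_mul_of_nonneg_right hK2 hTnn

end Frink

def chainSet {X : Type*} (ρ : X → X → ℝ) (x y : X) : Set ℝ :=
  {s | ∃ (N : ℕ) (f : ℕ → X), f 0 = x ∧ f (N + 1) = y ∧
    s = ∑ i ∈ Finset.range (N + 1), ρ (f i) (f (i + 1))}

noncomputable def FD {X : Type*} (ρ : X → X → ℝ) (x y : X) : ℝ := sInf (chainSet ρ x y)

section FDfacts
variable {X : Type*} (ρ : X → X → ℝ)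

lemma rho_mem_chainSet (x y : X) : ρ x y ∈ chainSet ρ x y := by
  refine ⟨0, fun i => if i = 0 then x else y, by simp, by simp, ?_⟩
  simp

lemma chainSet_nonneg (hnn : ∀ x y, 0 ≤ ρ x y) (x y : X) :
    ∀ s ∈ chainSet ρ x y, (0:ℝ) ≤ s := by
  rintro s ⟨N, f, -, -, rfl⟩
  exact Finset.sum_nonneg fun i _ => hnn _ _

lemma chainSet_bddBelow (hnn : ∀ x y, 0 ≤ ρ x y) (x y : X) : BddBelow (chainSet ρ x y) :=
  ⟨0, fun s hs => chainSet_nonneg ρ hnn x y s hs⟩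

lemma FD_nonneg (hnn : ∀ x y, 0 ≤ ρ x y) (x y : X) : 0 ≤ FD ρ x y :=
  le_csInf ⟨ρ x y, rho_mem_chainSet ρ x y⟩ (chainSet_nonneg ρ hnn x y)

lemma FD_le_rho (hnn : ∀ x y, 0 ≤ ρ x y) (x y : X) : FD ρ x y ≤ ρ x y :=
  csInf_le (chainSet_bddBelow ρ hnn x y) (rho_mem_chainSet ρ x y)

lemma rho_le_two_FD (hnn : ∀ x y, 0 ≤ ρ x y) (hrefl : ∀ x, ρ x x = 0)
    (K : ℝ) (hK1 : 1 ≤ K) (hK2 : K ^ 2 ≤ 2)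
    (hquasi : ∀ x y z, ρ x z ≤ K * max (ρ x y) (ρ y z)) (x y : X) :
    ρ x y ≤ 2 * FD ρ x y := by
  have h : ρ x y / 2 ≤ FD ρ x y := by
    apply le_csInf ⟨ρ x y, rho_mem_chainSet ρ x y⟩
    rintro s ⟨N, f, h0, hN, rfl⟩
    have := chain_bound' ρ hnn hrefl K hK1 hK2 hquasi N f
    rw [h0, hN] at this
    linarith
  linarith

lemma chainSet_symm_subset (hsymm : ∀ x y, ρ x y = ρ y x) (x y : X) :
    chainSet ρ x y ⊆ chainSet ρ y x := by
  rintro s ⟨N, f, h0, hN, rfl⟩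
  refine ⟨N, fun i => f (N + 1 - i), by simpa using hN, by simpa using h0, ?_⟩
  have hterm : ∀ i ∈ Finset.range (N + 1),
      ρ (f (N + 1 - i)) (f (N + 1 - (i + 1))) = ρ (f (N - i)) (f ((N - i) + 1)) := by
    intro i hi
    rw [Finset.mem_range] at hi
    have e1 : N + 1 - (i + 1) = N - i := by omega
    have e2 : N + 1 - i = (N - i) + 1 := by omega
    rw [e1, e2, hsymm]
  rw [Finset.sum_congr rfl hterm]
  have := Finset.sum_range_reflect (fun j => ρ (f j) (f (j + 1))) (N + 1)
  simpa using this.symm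

lemma FD_symm (hsymm : ∀ x y, ρ x y = ρ y x) (x y : X) : FD ρ x y = FD ρ y x := by
  unfold FD
  rw [Set.Subset.antisymm (chainSet_symm_subset ρ hsymm x y) (chainSet_symm_subset ρ hsymm y x)]

lemma chainSet_concat (x y z : X) {s1 s2 : ℝ}
    (h1 : s1 ∈ chainSet ρ x y) (h2 : s2 ∈ chainSet ρ y z) :
    s1 + s2 ∈ chainSet ρ x z := by
  obtain ⟨N1, f1, h10, h1N, rfl⟩ := h1
  obtain ⟨N2, f2, h20, h2N, rfl⟩ := h2
  classical
  set F : ℕ → X := fun i => if i ≤ N1 then f1 i else f2 (i - (N1 + 1)) with hF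
  refine ⟨N1 + N2 + 1, F, ?_, ?_, ?_⟩
  · simp [hF, h10]
  · have hnot : ¬ (N1 + N2 + 1 + 1 ≤ N1) := by omega
    simp only [hF, hnot, if_false]
    have e : N1 + N2 + 1 + 1 - (N1 + 1) = N2 + 1 := by omega
    rw [e, h2N]
  · rw [show N1 + N2 + 1 + 1 = (N1 + 1) + (N2 + 1) by omega,
      Finset.sum_range_add (fun i => ρ (F i) (F (i + 1))) (N1 + 1) (N2 + 1)]
    congr 1
    · apply Finset.sum_congr rfl
      intro i hi
      rw [Finset.mem_range] at hi
      have hi' : i ≤ N1 := by omega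
      by_cases hiN : i = N1
      · subst hiN
        have hnot : ¬ (i + 1 ≤ i) := by omega
        have e0 : i + 1 - (i + 1) = 0 := by omega
        simp only [hF, if_pos hi', hnot, if_false, e0, h20, h1N]
      · have : i + 1 ≤ N1 := by omega
        simp only [hF, if_pos hi', if_pos this]
    · apply Finset.sum_congr rfl
      intro i hi
      have hn1 : ¬ (N1 + 1 + i ≤ N1) := by omega
      have hn2 : ¬ (N1 + 1 + i + 1 ≤ N1) := by omega
      have e1 : N1 + 1 + i - (N1 + 1) = i := by omega
      have e2 : N1 + 1 + i + 1 - (N1 + 1) = i + 1 := by omega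
      simp only [hF, hn1, hn2, if_false, e1, e2]

lemma FD_triangle (hnn : ∀ x y, 0 ≤ ρ x y) (x y z : X) :
    FD ρ x z ≤ FD ρ x y + FD ρ y z := by
  have key : ∀ s1 ∈ chainSet ρ x y, ∀ s2 ∈ chainSet ρ y z, FD ρ x z ≤ s1 + s2 := by
    intro s1 hs1 s2 hs2
    exact csInf_le (chainSet_bddBelow ρ hnn x z) (chainSet_concat ρ x y z hs1 hs2)
  have step : ∀ s2 ∈ chainSet ρ y z, FD ρ x z - s2 ≤ FD ρ x y := by
    intro s2 hs2
    apply le_csInf ⟨ρ x y, rho_mem_chainSet ρ x y⟩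
    intro s1 hs1
    have := key s1 hs1 s2 hs2
    linarith
  have h : FD ρ x z - FD ρ x y ≤ FD ρ y z := by
    apply le_csInf ⟨ρ y z, rho_mem_chainSet ρ y z⟩
    intro s2 hs2
    have := step s2 hs2
    linarith
  linarith

end FDfacts

/-- **Meyerovitch–Tsukamoto.** For an expansive action of a finitely generated group there
are `α > 1` and a compatible metric `D` such that whenever `D(x,y) ≥ α^{-n}`, some `g` with
`|g| ≤ n` satisfies `D(gx, gy) ≥ 1/(4α)`. -/
theorem exists_compatible_metric_of_expansive
    {G : Type*} [Group G] (S : Set G) (hSfin : S.Finite) (hSsym : S⁻¹ = S)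
    (hSgen : Subgroup.closure S = ⊤)
    {X : Type*} [MetricSpace X] [CompactSpace X] (φ : G →* (X ≃ₜ X))
    (hexp : ∃ c > (0 : ℝ), ∀ x y : X, x ≠ y → c < ⨆ g : G, dist (φ g x) (φ g y)) :
    ∃ α : ℝ, 1 < α ∧ ∃ D : X → X → ℝ,
      (∀ x y, 0 ≤ D x y) ∧ (∀ x y, D x y = D y x) ∧ (∀ x y, D x y = 0 ↔ x = y) ∧
      (∀ x y z, D x z ≤ D x y + D y z) ∧
      (∀ s : Set X, IsOpen s ↔ ∀ x ∈ s, ∃ r > (0 : ℝ), {y | D x y < r} ⊆ s) ∧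
      ∀ n : ℕ, 0 < n → ∀ x y : X, x ≠ y → α ^ (-(n : ℤ)) ≤ D x y →
        ∃ g : G, wordLength S g ≤ n ∧ 1 / (4 * α) ≤ D (φ g x) (φ g y) := by
  classical
  obtain ⟨c, hc, hexp'⟩ := hexp
  -- uniform expansiveness constant
  obtain ⟨m0, hm0⟩ := uniform_expansive' S φ c hexp' (c / 2) (by linarith)
  set m : ℕ := max m0 1 with hmdef
  have hm1 : 1 ≤ m := le_max_right _ _
  have hm : ∀ x y : X, (∀ g : G, wordLength S g ≤ m → dist (φ g x) (φ g y) ≤ c) →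
      dist x y ≤ c / 2 :=
    fun x y h => hm0 x y (fun g hg => h g (le_trans hg (le_max_left _ _)))
  -- the base α
  have hmR : (0:ℝ) < (m:ℝ) := by exact_mod_cast hm1
  set α : ℝ := (2:ℝ) ^ ((2 * (m:ℝ))⁻¹) with hαdef
  have hα1 : 1 < α := by
    rw [hαdef, show (1:ℝ) = (2:ℝ) ^ (0:ℝ) by simp]
    exact Real.rpow_lt_rpow_of_exponent_lt (by norm_num) (by positivity)
  have hαpos : 0 < α := lt_trans one_pos hα1
  set β : ℝ := α⁻¹ with hβdef
  have hβpos : 0 < β := by positivity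
  have hβlt1 : β < 1 := by
    rw [hβdef]; exact inv_lt_one_of_one_lt₀ hα1
  have hβle1 : β ≤ 1 := le_of_lt hβlt1
  set K : ℝ := α ^ m with hKdef
  have hK1 : 1 ≤ K := one_le_pow₀ (le_of_lt hα1)
  have hKsq : K ^ 2 = 2 := by
    rw [hKdef, ← pow_mul, hαdef, ← Real.rpow_natCast ((2:ℝ) ^ ((2 * (m:ℝ))⁻¹)) (m * 2),
      ← Real.rpow_mul (by norm_num : (0:ℝ) ≤ 2)]
    have : (2 * (m:ℝ))⁻¹ * ((m * 2 : ℕ) : ℝ) = 1 := by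
      push_cast
      field_simp
    rw [this, Real.rpow_one]
  have hβK : K * β ^ m = 1 := by
    rw [hβdef, inv_pow, hKdef]
    exact mul_inv_cancel₀ (by positivity)
  -- the sets W and the first-separation time nn
  set W : X → X → Set ℕ :=
    fun x y => {i | ∃ g : G, wordLength S g ≤ i ∧ c < dist (φ g x) (φ g y)} with hWdef
  have hWne : ∀ x y : X, x ≠ y → (W x y).Nonempty := by
    intro x y hxy
    by_contra h
    rw [Set.not_nonempty_iff_eq_empty] at h
    have hb : ∀ g : G, dist (φ g x) (φ g y) ≤ c := by
      intro g
      by_contra hg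
      push_neg at hg
      have : wordLength S g ∈ W x y := ⟨g, le_refl _, hg⟩
      rw [h] at this
      exact this
    exact absurd (hexp' x y hxy) (not_lt.mpr (ciSup_le hb))
  have hWsymm : ∀ x y : X, W x y = W y x := by
    intro x y
    ext i
    constructor <;> (rintro ⟨g, h1, h2⟩; exact ⟨g, h1, by rwa [dist_comm]⟩)
  set nn : X → X → ℕ := fun x y => sInf (W x y) with hnndef
  -- the quasi-metric ρ
  set ρ : X → X → ℝ := fun x y => if x = y then 0 else β ^ (nn x y) with hρdef
  have hρnn : ∀ x y, 0 ≤ ρ x y := by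
    intro x y
    rw [hρdef]
    dsimp only
    split_ifs
    · exact le_refl _
    · positivity
  have hρrefl : ∀ x, ρ x x = 0 := by intro x; simp [hρdef]
  have hρsymm : ∀ x y, ρ x y = ρ y x := by
    intro x y
    rw [hρdef]
    dsimp only
    by_cases h : x = y
    · simp [h]
    · rw [if_neg h, if_neg (fun hyx => h hyx.symm), hnndef]
      dsimp only
      rw [hWsymm]
  have hρpos : ∀ x y, x ≠ y → 0 < ρ x y := by
    intro x y hxy
    rw [hρdef]
    dsimp only
    rw [if_neg hxy]
    positivity
  -- the key contraction claim
  have hclaim : ∀ x y z : X, x ≠ z → x ≠ y → y ≠ z →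
      min (nn x y) (nn y z) ≤ nn x z + m := by
    intro x y z hxz hxy hyz
    have hjW : nn x z ∈ W x z := Nat.sInf_mem (hWne x z hxz)
    obtain ⟨g, hgle, hgd⟩ := hjW
    by_contra hcon
    push_neg at hcon
    have hxy' : nn x z + m < nn x y := lt_of_lt_of_le hcon (min_le_left _ _)
    have hyz' : nn x z + m < nn y z := lt_of_lt_of_le hcon (min_le_right _ _)
    have hnotin : ∀ u v : X, nn x z + m < nn u v →
        ∀ h : G, wordLength S h ≤ m → dist (φ h (φ g u)) (φ h (φ g v)) ≤ c := by
      intro u v huv h hh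
      rw [← phi_mul_apply', ← phi_mul_apply']
      by_contra hd
      push_neg at hd
      have hmem : nn x z + m ∈ W u v := by
        refine ⟨h * g, ?_, hd⟩
        calc wordLength S (h * g) ≤ wordLength S h + wordLength S g :=
              wordLength_mul_le' hSsym hSgen h g
          _ ≤ m + nn x z := by omega
          _ = nn x z + m := by omega
      have : nn u v ≤ nn x z + m := Nat.sInf_le hmem
      omega
    have d1 : dist (φ g x) (φ g y) ≤ c / 2 := hm _ _ (hnotin x y hxy')
    have d2 : dist (φ g y) (φ g z) ≤ c / 2 := hm _ _ (hnotin y z hyz')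
    have : dist (φ g x) (φ g z) ≤ c := by
      calc dist (φ g x) (φ g z) ≤ dist (φ g x) (φ g y) + dist (φ g y) (φ g z) :=
            dist_triangle _ _ _
        _ ≤ c := by linarith
    linarith
  -- quasi-metric inequality
  have hquasi : ∀ x y z : X, ρ x z ≤ K * max (ρ x y) (ρ y z) := by
    intro x y z
    have hmaxnn : 0 ≤ max (ρ x y) (ρ y z) := le_trans (hρnn x y) (le_max_left _ _)
    by_cases hxz : x = z
    · rw [hxz, hρrefl]
      positivity
    by_cases hxy : x = y
    · subst hxy
      rw [max_eq_right (by rw [hρrefl]; exact hρnn x z)]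
      exact le_mul_of_one_le_left (hρnn x z) hK1
    by_cases hyz : y = z
    · subst hyz
      rw [max_eq_left (by rw [hρrefl]; exact hρnn x y)]
      exact le_mul_of_one_le_left (hρnn x y) hK1
    -- all distinct
    have hρxz : ρ x z = β ^ (nn x z) := by rw [hρdef]; exact if_neg hxz
    have hρxy : ρ x y = β ^ (nn x y) := by rw [hρdef]; exact if_neg hxy
    have hρyz : ρ y z = β ^ (nn y z) := by rw [hρdef]; exact if_neg hyz
    have hmax : max (ρ x y) (ρ y z) = β ^ (min (nn x y) (nn y z)) := by
      rw [hρxy, hρyz]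
      rcases le_total (nn x y) (nn y z) with h | h
      · rw [min_eq_left h, max_eq_left (pow_le_pow_of_le_one (le_of_lt hβpos) hβle1 h)]
      · rw [min_eq_right h, max_eq_right (pow_le_pow_of_le_one (le_of_lt hβpos) hβle1 h)]
    rw [hρxz, hmax]
    have hle := hclaim x y z hxz hxy hyz
    calc β ^ (nn x z) = K * β ^ m * β ^ (nn x z) := by rw [hβK, one_mul]
      _ = K * β ^ (nn x z + m) := by rw [pow_add]; ring
      _ ≤ K * β ^ (min (nn x y) (nn y z)) := by
          apply mul_le_mul_of_nonneg_left _ (by linarith)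
          exact pow_le_pow_of_le_one (le_of_lt hβpos) hβle1 hle
  have hK2 : K ^ 2 ≤ 2 := le_of_eq hKsq
  -- the metric D
  refine ⟨α, hα1, FD ρ, FD_nonneg ρ hρnn, FD_symm ρ hρsymm, ?_, FD_triangle ρ hρnn, ?_, ?_⟩
  · -- D = 0 iff eq
    intro x y
    constructor
    · intro h0
      by_contra hxy
      have h1 : ρ x y ≤ 2 * FD ρ x y := rho_le_two_FD ρ hρnn hρrefl K hK1 hK2 hquasi x y
      rw [h0] at h1
      have := hρpos x y hxy
      linarith
    · intro h
      subst h
      have h1 : FD ρ x x ≤ ρ x x := FD_le_rho ρ hρnn x x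
      rw [hρrefl] at h1
      exact le_antisymm h1 (FD_nonneg ρ hρnn x x)
  · -- topology
    intro s
    constructor
    · intro hs x hx
      obtain ⟨ε, hε, hball⟩ := Metric.isOpen_iff.mp hs x hx
      obtain ⟨j, hj⟩ := uniform_expansive' S φ c hexp' (ε / 2) (by linarith)
      refine ⟨β ^ (j + 1) / 2, by positivity, ?_⟩
      intro y hy
      rw [Set.mem_setOf_eq] at hy
      apply hball
      rw [Metric.mem_ball, dist_comm]
      by_cases hxy : x = y
      · subst hxy; simpa using hε
      have hρy : ρ x y ≤ 2 * FD ρ x y := rho_le_two_FD ρ hρnn hρrefl K hK1 hK2 hquasi x y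
      have hρlt : ρ x y < β ^ (j + 1) := by linarith
      have hρeq : ρ x y = β ^ (nn x y) := by rw [hρdef]; exact if_neg hxy
      have hnnj : j < nn x y := by
        by_contra hle
        push_neg at hle
        have : β ^ (nn x y) ≥ β ^ (j + 1) :=
          pow_le_pow_of_le_one (le_of_lt hβpos) hβle1 (by omega)
        rw [hρeq] at hρlt
        linarith
      have hnot : ∀ g : G, wordLength S g ≤ j → dist (φ g x) (φ g y) ≤ c := by
        intro g hg
        by_contra hd
        push_neg at hd
        have : j ∈ W x y := ⟨g, hg, hd⟩
        have : nn x y ≤ j := Nat.sInf_le this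
        omega
      have := hj x y hnot
      linarith
    · intro h
      rw [Metric.isOpen_iff]
      intro x hx
      obtain ⟨r, hr, hsub⟩ := h x hx
      obtain ⟨j, hjlt⟩ := exists_pow_lt_of_lt_one hr hβlt1
      -- uniform continuity over the finite ball of radius j
      have hUC : ∀ g : G, ∃ ε > 0, ∀ a b : X, dist a b < ε → dist (φ g a) (φ g b) < c := by
        intro g
        have huc : UniformContinuous (φ g) :=
          CompactSpace.uniformContinuous_of_continuous (φ g).continuous
        obtain ⟨ε, hε, hd⟩ := Metric.uniformContinuous_iff.mp huc c hc
        exact ⟨ε, hε, fun a b hab => hd hab⟩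
      choose εf hεf1 hεf2 using hUC
      have hBfin : {g : G | wordLength S g ≤ j}.Finite :=
        finite_wordBall' hSfin hSsym hSgen j
      set F : Finset G := hBfin.toFinset with hFdef
      have hFne : F.Nonempty := ⟨1, by simp [hFdef, wordLength_one']⟩
      set ε : ℝ := F.inf' hFne εf with hεdef
      have hεpos : 0 < ε := by
        rw [hεdef, Finset.lt_inf'_iff]
        intro g _
        exact hεf1 g
      refine ⟨ε, hεpos, ?_⟩
      intro y hy
      rw [Metric.mem_ball, dist_comm] at hy
      apply hsub
      rw [Set.mem_setOf_eq]
      by_cases hxy : x = y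
      · subst hxy
        have h1 : FD ρ x x ≤ ρ x x := FD_le_rho ρ hρnn x x
        rw [hρrefl] at h1
        linarith
      have hnnge : j < nn x y := by
        have hjn : j ∉ W x y := by
          rintro ⟨g, hgle, hgd⟩
          have hgF : g ∈ F := by
            rw [hFdef, Set.Finite.mem_toFinset]
            exact hgle
          have : dist (φ g x) (φ g y) < c :=
            hεf2 g x y (lt_of_lt_of_le hy (by rw [hεdef]; exact Finset.inf'_le εf hgF))
          linarith
        by_contra hle
        push_neg at hle
        exact hjn (Nat.sInf_mem (hWne x y hxy) |> fun hmem =>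
          (by
            obtain ⟨g, hg1, hg2⟩ := hmem
            exact ⟨g, le_trans hg1 hle, hg2⟩))
      have hρeq : ρ x y = β ^ (nn x y) := by rw [hρdef]; exact if_neg hxy
      have h1 : FD ρ x y ≤ ρ x y := FD_le_rho ρ hρnn x y
      have h2 : β ^ (nn x y) ≤ β ^ j :=
        pow_le_pow_of_le_one (le_of_lt hβpos) hβle1 (by omega)
      rw [hρeq] at h1
      linarith
  · -- the main separation property
    intro n hn x y hxy hD
    have hβn : α ^ (-(n : ℤ)) = β ^ n := by
      rw [hβdef, inv_pow, ← zpow_natCast α n, ← zpow_neg]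
    have hDρ : FD ρ x y ≤ ρ x y := FD_le_rho ρ hρnn x y
    have hρeq : ρ x y = β ^ (nn x y) := by rw [hρdef]; exact if_neg hxy
    have hβle : β ^ n ≤ β ^ (nn x y) := by
      rw [← hβn, ← hρeq]
      linarith
    have hnn_le : nn x y ≤ n := by
      by_contra hgt
      push_neg at hgt
      have : β ^ (nn x y) < β ^ n := pow_lt_pow_right_of_lt_one₀ hβpos hβlt1 hgt
      linarith
    obtain ⟨g, hgle, hgd⟩ := Nat.sInf_mem (hWne x y hxy)
    refine ⟨g, le_trans hgle hnn_le, ?_⟩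
    have hne' : φ g x ≠ φ g y := by
      intro heq
      rw [heq, dist_self] at hgd
      linarith
    have h0W : (0 : ℕ) ∈ W (φ g x) (φ g y) := by
      refine ⟨1, le_of_eq wordLength_one', ?_⟩
      rw [map_one]
      exact hgd
    have hnn0 : nn (φ g x) (φ g y) = 0 := Nat.eq_zero_of_le_zero (Nat.sInf_le h0W)
    have hρg : ρ (φ g x) (φ g y) = 1 := by
      rw [hρdef]
      dsimp only
      rw [if_neg hne', hnn0, pow_zero]
    have hlow : (1:ℝ) ≤ 2 * FD ρ (φ g x) (φ g y) := by
      have := rho_le_two_FD ρ hρnn hρrefl K hK1 hK2 hquasi (φ g x) (φ g y)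
      rw [hρg] at this
      linarith
    have h4α : (0:ℝ) < 4 * α := by linarith
    rw [div_le_iff₀ h4α]
    have : FD ρ (φ g x) (φ g y) ≥ 1 / 2 := by linarith
    nlinarith
end

section
/- A continuum X is Suslinian if and only if M_α = ∅ for some countable ordinal α, where the family M_α of subsets of the hyperspace C(X) is defined transfinitely by: M₁ = C(X); M_{α+1} = M̃_α; and M_λ = ⋂_{α<λ} M_α for every limit ordinal λ. -/
open Pointwise Filter Metric Set Topology TopologicalSpace

/-- The hyperspace `C(X)` of all subcontinua of `X`, with the Hausdorff metric inherited
from `NonemptyCompacts X`. -/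
abbrev Subcontinua (X : Type*) [MetricSpace X] : Type _ :=
  {A : NonemptyCompacts X // IsConnected (A : Set X)}

/-- The operation `M ↦ M̃`:  `A ∈ M̃` iff for every `ε > 0` and `k ∈ ℕ` there are
pairwise disjoint nondegenerate subcontinua `A₁, …, A_k ∈ M` with `d_H(A, A_i) < ε`. -/
def tildeOp {X : Type*} [MetricSpace X] (M : Set (Subcontinua X)) : Set (Subcontinua X) :=
  {A | ∀ ε > (0 : ℝ), ∀ k : ℕ, ∃ f : Fin k → Subcontinua X,
    (∀ i, f i ∈ M) ∧ (∀ i, ((f i : Set X)).Nontrivial) ∧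
    (Pairwise fun i j => Disjoint ((f i : Set X)) ((f j : Set X))) ∧
    ∀ i, dist A (f i) < ε}

/-- The transfinite family `M_α`:  `M 1 = C(X)`, `M (α+1) = tildeOp (M α)` for `α ≥ 1`,
and `M λ = ⋂_{α<λ} M_α` at limit ordinals (the value at `0` is set to `C(X)` as well). -/
noncomputable def Mfam (X : Type*) [MetricSpace X] : Ordinal → Set (Subcontinua X) :=
  fun o => Ordinal.limitRecOn o Set.univ
    (fun α ih => if α = 0 then Set.univ else tildeOp ih)
    (fun o _ ih => ⋂ (o' : Ordinal) (h : o' < o), ih o' h)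

/-- The induced action of `G` on the hyperspace `C(X)`: `g · A = φ(g)(A)`. -/
noncomputable def actC {G X : Type*} [Group G] [MetricSpace X]
    (φ : G →* (X ≃ₜ X)) (g : G) (A : Subcontinua X) : Subcontinua X :=
  ⟨⟨⟨(φ g) '' (A : Set X), A.1.isCompact.image (φ g).continuous⟩,
      A.1.nonempty.image _⟩,
    A.2.image _ (φ g).continuous.continuousOn⟩

namespace Kato
variable {X : Type*} [MetricSpace X]

theorem dist_eq (A B : Subcontinua X) :
    dist A B = hausdorffDist (A : Set X) (B : Set X) := by
  rw [Subtype.dist_eq, NonemptyCompacts.dist_eq]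

theorem edist_ne_top (A B : Subcontinua X) :
    EMetric.hausdorffEdist (A : Set X) (B : Set X) ≠ ⊤ :=
  hausdorffEdist_ne_top_of_nonempty_of_bounded A.1.nonempty B.1.nonempty
    A.1.isCompact.isBounded B.1.isCompact.isBounded

theorem tildeOp_mono {M N : Set (Subcontinua X)} (h : M ⊆ N) : tildeOp M ⊆ tildeOp N := by
  intro A hA ε hε k
  obtain ⟨f, h1, h2, h3, h4⟩ := hA ε hε k
  exact ⟨f, fun i => h (h1 i), h2, h3, h4⟩

theorem tildeOp_subset_closure (M : Set (Subcontinua X)) : tildeOp M ⊆ closure M := by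
  intro A hA
  rw [Metric.mem_closure_iff]
  intro ε hε
  obtain ⟨f, h1, _, _, h4⟩ := hA ε hε 1
  exact ⟨f 0, h1 0, h4 0⟩

theorem isClosed_tildeOp (M : Set (Subcontinua X)) : IsClosed (tildeOp M) := by
  rw [← isSeqClosed_iff_isClosed]
  intro u A hu hA ε hε k
  obtain ⟨n, hn⟩ := Metric.tendsto_atTop.1 hA (ε/2) (by linarith)
  replace hn := hn n le_rfl
  obtain ⟨f, h1, h2, h3, h4⟩ := hu n (ε/2) (by linarith) k
  refine ⟨f, h1, h2, h3, fun i => ?_⟩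
  calc dist A (f i) ≤ dist A (u n) + dist (u n) (f i) := dist_triangle _ _ _
    _ < ε/2 + ε/2 := by rw [dist_comm]; exact add_lt_add (hn) (h4 i)
    _ = ε := by ring

variable (X)

theorem Mfam_zero : Mfam X 0 = Set.univ := by
  simp [Mfam]

theorem Mfam_succ (o : Ordinal) (ho : o ≠ 0) :
    Mfam X (Order.succ o) = tildeOp (Mfam X o) := by
  simp [Mfam, Ordinal.limitRecOn_succ, ho]

theorem Mfam_one : Mfam X 1 = Set.univ := by
  have : (1 : Ordinal) = Order.succ 0 := by simp
  rw [this, Mfam, Ordinal.limitRecOn_succ]; simp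

theorem Mfam_limit (o : Ordinal) (ho : Order.IsSuccLimit o) :
    Mfam X o = ⋂ (o' : Ordinal) (_ : o' < o), Mfam X o' := by
  simp only [Mfam, Ordinal.limitRecOn_limit _ _ _ _ ho]

theorem isClosed_Mfam : ∀ o : Ordinal, IsClosed (Mfam X o) := by
  intro o
  induction o using Ordinal.induction with
  | _ o ih =>
    rcases Ordinal.zero_or_succ_or_isSuccLimit o with h | ⟨a, rfl⟩ | h
    · rw [h, Mfam_zero]; exact isClosed_univ
    · rcases eq_or_ne a 0 with rfl | ha
      · have : Order.succ (0:Ordinal) = 1 := by simp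
        rw [this, Mfam_one]; exact isClosed_univ
      · rw [Mfam_succ X a ha]; exact isClosed_tildeOp _
    · rw [Mfam_limit X o h]
      exact isClosed_iInter fun o' => isClosed_iInter fun _ => ih o' ‹o' < o›

theorem Mfam_antitone : ∀ {β α : Ordinal}, β ≤ α → Mfam X α ⊆ Mfam X β := by
  intro β α
  induction α using Ordinal.induction with
  | _ α ih =>
    intro hβ
    rcases eq_or_lt_of_le hβ with rfl | hlt
    · exact subset_rfl
    rcases Ordinal.zero_or_succ_or_isSuccLimit α with h | ⟨a, rfl⟩ | h
    · exact absurd (h ▸ hlt) (show ¬ β < 0 from not_lt_zero)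
    · have hβa : β ≤ a := Order.lt_succ_iff.mp hlt
      have hsub : Mfam X (Order.succ a) ⊆ Mfam X a := by
        rcases eq_or_ne a 0 with rfl | ha
        · intro x _; rw [Mfam_zero]; trivial
        · rw [Mfam_succ X a ha]
          exact (tildeOp_subset_closure _).trans
            ((isClosed_Mfam X a).closure_subset_iff.mpr subset_rfl)
      exact hsub.trans (ih a (Order.lt_succ a) hβa)
    · rw [Mfam_limit X α h]
      intro x hx
      simp only [Set.mem_iInter] at hx
      exact hx β hlt


theorem countable_not_condensation {Y : Type*} [TopologicalSpace Y] [SecondCountableTopology Y]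
    (S : Set Y) : {y | y ∈ S ∧ ∃ U, IsOpen U ∧ y ∈ U ∧ (S ∩ U).Countable}.Countable := by
  obtain ⟨b, hbc, -, hb⟩ := TopologicalSpace.exists_countable_basis Y
  have hsub : {y | y ∈ S ∧ ∃ U, IsOpen U ∧ y ∈ U ∧ (S ∩ U).Countable} ⊆
      ⋃ v ∈ {v ∈ b | (S ∩ v).Countable}, (S ∩ v) := by
    rintro y ⟨hyS, U, hU, hyU, hcU⟩
    obtain ⟨v, hvb, hyv, hvU⟩ := hb.exists_subset_of_mem_open hyU hU
    exact Set.mem_biUnion ⟨hvb, hcU.mono (Set.inter_subset_inter_right _ hvU)⟩ ⟨hyS, hyv⟩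
  exact Set.Countable.mono hsub
    ((hbc.mono (Set.sep_subset _ _)).biUnion fun v hv => hv.2)

variable {X : Type*} [MetricSpace X]

theorem subcoe_injective : Function.Injective (fun A : Subcontinua X => (A : Set X)) := by
  intro A B h
  exact Subtype.ext (NonemptyCompacts.ext h)

theorem diff_Mfam_countable [CompactSpace X] (𝒜 : Set (Subcontinua X))
    (hnt : ∀ A ∈ 𝒜, (A : Set X).Nontrivial)
    (hdisj : ∀ A ∈ 𝒜, ∀ B ∈ 𝒜, A ≠ B → Disjoint (A : Set X) (B : Set X)) :
    ∀ α : Ordinal, α.card ≤ Cardinal.aleph0 → (𝒜 \ Mfam X α).Countable := by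
  intro α
  induction α using Ordinal.induction with
  | _ α ih =>
    intro hcard
    rcases Ordinal.zero_or_succ_or_isSuccLimit α with h | ⟨a, rfl⟩ | h
    · rw [h, Mfam_zero]; simp
    · rcases eq_or_ne a 0 with rfl | ha
      · have h1 : Order.succ (0:Ordinal) = 1 := by simp
        rw [h1, Mfam_one]; simp
      · have hacard : a.card ≤ Cardinal.aleph0 :=
          le_trans (Ordinal.card_le_card (le_of_lt (Order.lt_succ a))) hcard
        have hprev : (𝒜 \ Mfam X a).Countable := ih a (Order.lt_succ a) hacard
        rw [Mfam_succ X a ha]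
        set S : Set (Subcontinua X) := 𝒜 ∩ Mfam X a with hS
        have hbad := countable_not_condensation S
        refine Set.Countable.mono ?_ (hprev.union hbad)
        rintro A ⟨hA𝒜, hAt⟩
        by_cases hAa : A ∈ Mfam X a
        swap
        · exact Or.inl ⟨hA𝒜, hAa⟩
        by_cases hB : A ∈ {y | y ∈ S ∧ ∃ U, IsOpen U ∧ y ∈ U ∧ (S ∩ U).Countable}
        · exact Or.inr hB
        exfalso; apply hAt
        intro ε hε k
        have hSA : A ∈ S := ⟨hA𝒜, hAa⟩
        have hnc : ¬ (S ∩ Metric.ball A ε).Countable := by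
          intro hc
          exact hB ⟨hSA, Metric.ball A ε, Metric.isOpen_ball, Metric.mem_ball_self hε, hc⟩
        have hinf : (S ∩ Metric.ball A ε).Infinite := by
          intro hfin; exact hnc hfin.countable
        have e := hinf.natEmbedding
        refine ⟨fun i => (e i).1, fun i => (e i).2.1.2, fun i => hnt _ (e i).2.1.1, ?_, ?_⟩
        · intro i j hij
          have hne : (e i.val).1 ≠ (e j.val).1 := by
            intro hh
            exact hij (Fin.val_injective (e.injective (Subtype.ext hh)))
          exact hdisj _ (e i).2.1.1 _ (e j).2.1.1 hne
        · intro i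
          have := (e i).2.2
          rw [Metric.mem_ball] at this
          rw [dist_comm] at this
          exact this
    · rw [Mfam_limit X α h]
      have hIio : Countable (Set.Iio α) := by
        rw [← Cardinal.mk_le_aleph0_iff, Ordinal.mk_Iio_ordinal]
        exact Cardinal.lift_le_aleph0.mpr hcard
      have : (𝒜 \ ⋂ (o' : Ordinal) (_ : o' < α), Mfam X o') ⊆
          ⋃ (β : Set.Iio α), (𝒜 \ Mfam X β.1) := by
        rintro A ⟨hA, hAn⟩
        simp only [Set.mem_iInter] at hAn
        push_neg at hAn
        obtain ⟨β, hβ, hβn⟩ := hAn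
        exact Set.mem_iUnion.mpr ⟨⟨β, hβ⟩, hA, hβn⟩
      refine Set.Countable.mono this (Set.countable_iUnion fun β => ih β.1 β.2 ?_)
      exact le_trans (Ordinal.card_le_card (le_of_lt β.2)) hcard
theorem subset_thickening_of_hdist_lt {A B : Set X} (hB : B.Nonempty) {δ : ℝ}
    (h : hausdorffDist A B < δ) (fin : EMetric.hausdorffEdist A B ≠ ⊤) :
    A ⊆ thickening δ B := by
  intro x hx
  rw [mem_thickening_iff_infDist_lt hB]
  exact lt_of_le_of_lt (infDist_le_hausdorffDist_of_mem hx fin) h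

theorem nontrivial_limit_of_hdist_lt {A L : Set X} {a b : X} (ha : a ∈ A) (hb : b ∈ A)
    (hab : a ≠ b) (h : hausdorffDist A L < dist a b / 3)
    (fin : EMetric.hausdorffEdist A L ≠ ⊤) : L.Nontrivial := by
  obtain ⟨a', ha', haa⟩ := exists_dist_lt_of_hausdorffDist_lt ha h fin
  obtain ⟨b', hb', hbb⟩ := exists_dist_lt_of_hausdorffDist_lt hb h fin
  refine ⟨a', ha', b', hb', fun hcon => ?_⟩
  have hd : 0 < dist a b := dist_pos.mpr hab
  have h4 := dist_triangle4 a a' b' b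
  rw [hcon, dist_self, dist_comm b' b] at h4
  rw [hcon] at haa
  nlinarith
theorem isConnected_of_tendsto {F : ℕ → NonemptyCompacts X} {L : NonemptyCompacts X}
    (hF : ∀ n, IsConnected (F n : Set X))
    (hL : Filter.Tendsto F Filter.atTop (nhds L)) : IsConnected (L : Set X) := by
  refine ⟨L.nonempty, ?_⟩
  rw [isPreconnected_iff_subset_of_fully_disjoint_closed L.isCompact.isClosed]
  intro u v hu hv hsub hdisj
  by_contra hcon
  push_neg at hcon
  obtain ⟨hnu, hnv⟩ := hcon
  set K₁ : Set X := (L : Set X) ∩ u with hK₁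
  set K₂ : Set X := (L : Set X) ∩ v with hK₂
  have hK₁c : IsCompact K₁ := L.isCompact.inter_right hu
  have hK₂c : IsCompact K₂ := L.isCompact.inter_right hv
  have hK₁n : K₁.Nonempty := by
    rcases Set.not_subset.mp hnv with ⟨p, hpL, hpv⟩
    exact ⟨p, hpL, (hsub hpL).resolve_right hpv⟩
  have hK₂n : K₂.Nonempty := by
    rcases Set.not_subset.mp hnu with ⟨p, hpL, hpu⟩
    exact ⟨p, hpL, (hsub hpL).resolve_left hpu⟩
  have hKdisj : Disjoint K₁ K₂ :=
    Set.disjoint_of_subset (Set.inter_subset_right) (Set.inter_subset_right) hdisj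
  obtain ⟨δ, hδ, hTdisj⟩ := hKdisj.exists_thickenings hK₁c hK₂c.isClosed
  obtain ⟨n, hn⟩ := Metric.tendsto_atTop.1 hL δ hδ
  replace hn := hn n le_rfl
  rw [NonemptyCompacts.dist_eq] at hn
  have finFL : EMetric.hausdorffEdist ((F n : Set X)) (L : Set X) ≠ ⊤ :=
    hausdorffEdist_ne_top_of_nonempty_of_bounded (F n).nonempty L.nonempty
      (F n).isCompact.isBounded L.isCompact.isBounded
  have hLcov : (L : Set X) = K₁ ∪ K₂ := by
    ext p; constructor
    · intro hp; rcases hsub hp with h | h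
      · exact Or.inl ⟨hp, h⟩
      · exact Or.inr ⟨hp, h⟩
    · rintro (⟨hp, -⟩ | ⟨hp, -⟩) <;> exact hp
  have hFsub : (F n : Set X) ⊆ thickening δ K₁ ∪ thickening δ K₂ := by
    have : (F n : Set X) ⊆ thickening δ (L : Set X) :=
      subset_thickening_of_hdist_lt L.nonempty hn finFL
    rwa [hLcov, thickening_union] at this
  have hmeet : ∀ (K : Set X), K ⊆ (L : Set X) → K.Nonempty →
      ((F n : Set X) ∩ thickening δ K).Nonempty := by
    rintro K hKL ⟨p, hp⟩
    have hdLF : hausdorffDist (L : Set X) (F n : Set X) < δ := by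
      rwa [hausdorffDist_comm] at hn
    obtain ⟨q, hq, hpq⟩ := exists_dist_lt_of_hausdorffDist_lt (hKL hp) hdLF
      (by rw [Metric.hausdorffEDist_comm]; exact finFL)
    exact ⟨q, hq, Metric.mem_thickening_iff.mpr ⟨p, hp, by rwa [dist_comm]⟩⟩
  obtain ⟨q, hq⟩ := (hF n).isPreconnected _ _ (isOpen_thickening) (isOpen_thickening) hFsub
    (hmeet K₁ Set.inter_subset_left hK₁n) (hmeet K₂ Set.inter_subset_left hK₂n)
  exact Set.disjoint_iff.mp hTdisj ⟨hq.2.1, hq.2.2⟩ |>.elim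
structure Stage (M : Set (Subcontinua X)) (n : ℕ) where
  c : (Fin n → Bool) → Subcontinua X
  mem : ∀ s, c s ∈ M
  nt : ∀ s, ((c s : Set X)).Nontrivial
  disj : ∀ s t, s ≠ t → Disjoint ((c s : Set X)) ((c t : Set X))

theorem subc_subset_thick {A B : Subcontinua X} {δ : ℝ} (h : dist A B < δ) :
    (A : Set X) ⊆ thickening δ (B : Set X) :=
  subset_thickening_of_hdist_lt B.1.nonempty (by rwa [dist_eq] at h) (edist_ne_top A B)

theorem exists_unif_delta {M : Set (Subcontinua X)} (n : ℕ) (S : Stage M n) :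
    ∃ δ > 0, ∀ s t, s ≠ t →
      Disjoint (thickening δ ((S.c s : Set X))) (thickening δ ((S.c t : Set X))) := by
  have H : ∀ p : (Fin n → Bool) × (Fin n → Bool), ∃ δ, 0 < δ ∧ (p.1 ≠ p.2 →
      Disjoint (thickening δ ((S.c p.1 : Set X))) (thickening δ ((S.c p.2 : Set X)))) := by
    intro p
    by_cases h : p.1 = p.2
    · exact ⟨1, one_pos, fun hc => absurd h hc⟩
    · obtain ⟨δ, hδ, hd⟩ := (S.disj _ _ h).exists_thickenings
        (S.c p.1).1.isCompact (S.c p.2).1.isCompact.isClosed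
      exact ⟨δ, hδ, fun _ => hd⟩
  choose d hd hdisj using H
  refine ⟨Finset.univ.inf' ⟨(default, default), Finset.mem_univ _⟩ d, ?_, ?_⟩
  · exact (Finset.lt_inf'_iff _).mpr fun p _ => hd p
  · intro s t hst
    refine (hdisj (s, t) hst).mono (thickening_mono ?_ _) (thickening_mono ?_ _) <;>
      exact Finset.inf'_le _ (Finset.mem_univ _)

theorem stage_step {M : Set (Subcontinua X)} (hM : M ⊆ tildeOp M) {n : ℕ} (S : Stage M n)
    {ε : ℝ} (hε : 0 < ε)
    (hthick : ∀ s t, s ≠ t → Disjoint (thickening (4*ε) ((S.c s : Set X)))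
      (thickening (4*ε) ((S.c t : Set X)))) :
    ∃ T : Stage M (n+1), ∀ s : Fin (n+1) → Bool, dist (T.c s) (S.c (Fin.init s)) < ε := by
  have H : ∀ t : Fin n → Bool, ∃ f : Fin 2 → Subcontinua X, (∀ i, f i ∈ M) ∧
      (∀ i, ((f i : Set X)).Nontrivial) ∧
      (Pairwise fun i j => Disjoint ((f i : Set X)) ((f j : Set X))) ∧
      ∀ i, dist (S.c t) (f i) < ε :=
    fun t => hM (S.mem t) ε hε 2
  choose f hmem hnt hdisj hdist using H
  refine ⟨⟨fun s => f (Fin.init s) (if s (Fin.last n) then 1 else 0),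
    fun s => hmem _ _, fun s => hnt _ _, ?_⟩, fun s => by rw [dist_comm]; exact hdist _ _⟩
  intro s t hst
  beta_reduce
  by_cases hinit : Fin.init s = Fin.init t
  · have hlast : s (Fin.last n) ≠ t (Fin.last n) := by
      intro hl
      exact hst (by rw [← Fin.snoc_init_self s, ← Fin.snoc_init_self t, hinit, hl])
    have hidx : (if s (Fin.last n) then (1 : Fin 2) else 0) ≠
        (if t (Fin.last n) then 1 else 0) := by
      cases hs : s (Fin.last n) <;> cases ht : t (Fin.last n) <;> simp_all
    rw [hinit]
    exact hdisj _ hidx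
  · have h1 := subc_subset_thick (show dist (f (Fin.init s)
        (if s (Fin.last n) then 1 else 0)) (S.c (Fin.init s)) < 4*ε by
      rw [dist_comm]; exact lt_of_lt_of_le (hdist _ _) (by linarith))
    have h2 := subc_subset_thick (show dist (f (Fin.init t)
        (if t (Fin.last n) then 1 else 0)) (S.c (Fin.init t)) < 4*ε by
      rw [dist_comm]; exact lt_of_lt_of_le (hdist _ _) (by linarith))
    exact Set.disjoint_of_subset h1 h2 (hthick _ _ hinit)

def thickGood (M : Set (Subcontinua X)) (n : ℕ) (S : Stage M n) (ε : ℝ) : Prop :=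
  0 < ε ∧ ∀ s t, s ≠ t → Disjoint (thickening (4*ε) ((S.c s : Set X)))
    (thickening (4*ε) ((S.c t : Set X)))

def R (M : Set (Subcontinua X)) (n : ℕ) : Type _ :=
  Σ' (S : Stage M n) (ε : ℝ), thickGood M n S ε

theorem exists_next {M : Set (Subcontinua X)} (hM : M ⊆ tildeOp M) (n : ℕ) (S : Stage M n)
    (ε : ℝ) (hg : thickGood M n S ε) :
    ∃ (T : Stage M (n+1)) (ε' : ℝ), thickGood M (n+1) T ε' ∧
      (∀ s, dist (T.c s) (S.c (Fin.init s)) < ε) ∧ ε' ≤ ε/2 := by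
  obtain ⟨T, hT⟩ := stage_step hM S hg.1 hg.2
  obtain ⟨δ, hδ, hdisj⟩ := exists_unif_delta (n+1) T
  refine ⟨T, min (ε/2) (δ/4), ⟨?_, ?_⟩, hT, min_le_left _ _⟩
  · have := hg.1
    positivity
  · intro s t hst
    refine (hdisj s t hst).mono (thickening_mono ?_ _) (thickening_mono ?_ _) <;>
    · have := min_le_right (ε/2) (δ/4)
      linarith
noncomputable def chain {M : Set (Subcontinua X)} (hM : M ⊆ tildeOp M) (r0 : R M 0) :
    ∀ n, R M n
  | 0 => r0
  | (n+1) =>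
    ⟨(exists_next hM n (chain hM r0 n).1 (chain hM r0 n).2.1 (chain hM r0 n).2.2).choose,
     (exists_next hM n (chain hM r0 n).1 (chain hM r0 n).2.1
        (chain hM r0 n).2.2).choose_spec.choose,
     (exists_next hM n (chain hM r0 n).1 (chain hM r0 n).2.1
        (chain hM r0 n).2.2).choose_spec.choose_spec.1⟩

theorem chain_link {M : Set (Subcontinua X)} (hM : M ⊆ tildeOp M) (r0 : R M 0) (n : ℕ) :
    (∀ s, dist ((chain hM r0 (n+1)).1.c s) ((chain hM r0 n).1.c (Fin.init s))
        < (chain hM r0 n).2.1) ∧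
      (chain hM r0 (n+1)).2.1 ≤ (chain hM r0 n).2.1 / 2 :=
  (exists_next hM n (chain hM r0 n).1 (chain hM r0 n).2.1
    (chain hM r0 n).2.2).choose_spec.choose_spec.2
theorem exists_uncountable_family [CompactSpace X] [Nonempty X]
    (M : Set (Subcontinua X)) (hM : M ⊆ tildeOp M) (hne : M.Nonempty) :
    ∃ L : (ℕ → Bool) → NonemptyCompacts X,
      (∀ x, IsConnected (L x : Set X)) ∧ (∀ x, (L x : Set X).Nontrivial) ∧
      (∀ x y, x ≠ y → Disjoint ((L x : Set X)) ((L y : Set X))) := by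
  classical
  -- get a nontrivial element of M
  obtain ⟨B, hB⟩ := hne
  obtain ⟨f, hf1, hf2, -, -⟩ := hM hB 1 one_pos 1
  set A₀ : Subcontinua X := f 0 with hA₀
  obtain ⟨a, ha, b, hb, hab⟩ := hf2 0
  set d : ℝ := dist a b with hd
  have hdpos : 0 < d := dist_pos.mpr hab
  -- stage 0
  set r0 : R M 0 :=
    ⟨⟨fun _ => A₀, fun _ => hf1 0, fun _ => hf2 0,
      fun s t hst => absurd (Subsingleton.elim s t) hst⟩,
      d/8, by positivity, fun s t hst => absurd (Subsingleton.elim s t) hst⟩ with hr0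
  set seq := chain hM r0 with hseq
  set ε : ℕ → ℝ := fun n => (seq n).2.1 with hε
  have hεpos : ∀ n, 0 < ε n := fun n => (seq n).2.2.1
  have hhalf : ∀ n, ε (n+1) ≤ ε n / 2 := fun n => (chain_link hM r0 n).2
  set F : (ℕ → Bool) → ℕ → NonemptyCompacts X :=
    fun x n => ((seq n).1.c (fun i => x i)).1 with hF
  have hFd : ∀ x n, dist (F x n) (F x (n+1)) ≤ ε n := by
    intro x n
    have h1 := (chain_link hM r0 n).1 (fun i : Fin (n+1) => x i)
    have h2 : Fin.init (fun i : Fin (n+1) => x (i : ℕ)) = fun i : Fin n => x (i : ℕ) := by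
      funext i; simp [Fin.init]
    rw [h2] at h1
    rw [dist_comm]
    rw [Subtype.dist_eq] at h1
    exact le_of_lt h1
  -- geometric bounds
  have hsum : ∀ x n m, dist (F x n) (F x (n+m)) ≤ 2 * ε n - 2 * ε (n+m) := by
    intro x n m
    induction m with
    | zero => simp
    | succ m ih =>
      have h3 := hFd x (n+m)
      have h4 := hhalf (n+m)
      calc dist (F x n) (F x (n+m+1))
          ≤ dist (F x n) (F x (n+m)) + dist (F x (n+m)) (F x (n+m+1)) := dist_triangle _ _ _
        _ ≤ (2 * ε n - 2 * ε (n+m)) + ε (n+m) := add_le_add ih h3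
        _ ≤ 2 * ε n - 2 * ε (n+m+1) := by
            have : ε (n + m + 1) ≤ ε (n+m) / 2 := h4
            linarith
  have hsum' : ∀ x n m, dist (F x n) (F x (n+m)) ≤ 2 * ε n := by
    intro x n m
    have := hεpos (n+m)
    have := hsum x n m
    linarith
  have hgeo : ∀ n, ε n ≤ ε 0 * (1/2)^n := by
    intro n
    induction n with
    | zero => simp
    | succ n ih =>
      calc ε (n+1) ≤ ε n / 2 := hhalf n
        _ ≤ (ε 0 * (1/2)^n) / 2 := by linarith
        _ = ε 0 * (1/2)^(n+1) := by ring
  have hcauchy : ∀ x, CauchySeq (F x) := by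
    intro x
    apply cauchySeq_of_le_geometric (1/2 : ℝ) (ε 0) (by norm_num)
    intro n
    calc dist (F x n) (F x (n+1)) ≤ ε n := hFd x n
      _ ≤ ε 0 * (1/2)^n := hgeo n
  have hLex : ∀ x, ∃ L : NonemptyCompacts X, Filter.Tendsto (F x) Filter.atTop (nhds L) :=
    fun x => cauchySeq_tendsto_of_complete (hcauchy x)
  choose L hL using hLex
  have hFL : ∀ x n, dist (F x n) (L x) ≤ 2 * ε n := by
    intro x n
    have htd : Filter.Tendsto (fun m => dist (F x n) (F x m)) Filter.atTop
        (nhds (dist (F x n) (L x))) := Filter.Tendsto.dist tendsto_const_nhds (hL x)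
    refine le_of_tendsto htd ?_
    filter_upwards [Filter.eventually_ge_atTop n] with m hm
    obtain ⟨k, rfl⟩ := Nat.exists_eq_add_of_le hm
    exact hsum' x n k
  refine ⟨L, ?_, ?_, ?_⟩
  · intro x
    exact isConnected_of_tendsto (fun n => ((seq n).1.c _).2) (hL x)
  · intro x
    have hF0 : F x 0 = A₀.1 := rfl
    have hdist : hausdorffDist (A₀ : Set X) ((L x : Set X)) < d / 3 := by
      rw [← NonemptyCompacts.dist_eq]
      have h1 : dist (F x 0) (L x) ≤ 2 * ε 0 := hFL x 0
      rw [hF0] at h1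
      have hε0 : ε 0 = d/8 := rfl
      calc dist A₀.1 (L x) ≤ 2 * ε 0 := h1
        _ < d / 3 := by rw [hε0]; linarith
    exact nontrivial_limit_of_hdist_lt ha hb hab hdist
      (hausdorffEdist_ne_top_of_nonempty_of_bounded A₀.1.nonempty (L x).nonempty
        A₀.1.isCompact.isBounded (L x).isCompact.isBounded)
  · intro x y hxy
    obtain ⟨n, hn⟩ := Function.ne_iff.mp hxy
    set m := n + 1 with hm
    have hst : (fun i : Fin m => x (i : ℕ)) ≠ (fun i : Fin m => y (i : ℕ)) := by
      intro h
      exact hn (congrFun h ⟨n, Nat.lt_succ_self n⟩)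
    have hthick := (seq m).2.2.2 _ _ hst
    have hsub : ∀ z : ℕ → Bool, ((L z : Set X)) ⊆
        thickening (4 * ε m) (((seq m).1.c (fun i : Fin m => z (i : ℕ)) : Set X)) := by
      intro z
      apply subset_thickening_of_hdist_lt ((seq m).1.c _).1.nonempty
      · rw [← NonemptyCompacts.dist_eq]
        have h1 : dist (F z m) (L z) ≤ 2 * ε m := hFL z m
        have := hεpos m
        rw [dist_comm] at h1
        calc dist (L z) (F z m) ≤ 2 * ε m := h1
          _ < 4 * ε m := by linarith
      · exact hausdorffEdist_ne_top_of_nonempty_of_bounded (L z).nonempty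
          ((seq m).1.c _).1.nonempty (L z).isCompact.isBounded
          ((seq m).1.c _).1.isCompact.isBounded
    exact Set.disjoint_of_subset (hsub x) (hsub y) hthick
theorem exists_stab (X : Type*) [MetricSpace X] [CompactSpace X] [Nonempty X] :
    ∃ α : Ordinal, α ≠ 0 ∧ α.card ≤ Cardinal.aleph0 ∧
      Mfam X (Order.succ α) = Mfam X α := by
  classical
  by_contra hcon
  push_neg at hcon
  -- for each countable nonzero α, pick a witness and a basic open set
  have hpick : ∀ α : Ordinal, α ≠ 0 → α.card ≤ Cardinal.aleph0 →
      ∃ A : Subcontinua X, A ∈ Mfam X α ∧ A ∉ Mfam X (Order.succ α) := by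
    intro α hα0 hαc
    have hsub : Mfam X (Order.succ α) ⊆ Mfam X α := Mfam_antitone X (Order.le_succ α)
    have hne := hcon α hα0 hαc
    rcases Set.exists_of_ssubset ⟨hsub, fun h => hne (le_antisymm hsub h)⟩ with ⟨A, hA1, hA2⟩
    exact ⟨A, hA1, hA2⟩
  obtain ⟨b, hbc, -, hb⟩ := TopologicalSpace.exists_countable_basis (Subcontinua X)
  have hU : ∀ α : Ordinal, α ≠ 0 → α.card ≤ Cardinal.aleph0 →
      ∃ (A : Subcontinua X) (U : Set (Subcontinua X)), U ∈ b ∧ A ∈ U ∧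
        U ⊆ (Mfam X (Order.succ α))ᶜ ∧ A ∈ Mfam X α := by
    intro α hα0 hαc
    obtain ⟨A, hA1, hA2⟩ := hpick α hα0 hαc
    have hop : IsOpen (Mfam X (Order.succ α))ᶜ := (isClosed_Mfam X _).isOpen_compl
    obtain ⟨U, hUb, hAU, hUs⟩ := hb.exists_subset_of_mem_open hA2 hop
    exact ⟨A, U, hUb, hAU, hUs, hA1⟩
  -- succ of countable is countable
  have hsc : ∀ β : Ordinal, β.card ≤ Cardinal.aleph0 →
      (Order.succ β).card ≤ Cardinal.aleph0 := by
    intro β hβ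
    rw [Ordinal.card_succ]
    exact Cardinal.add_le_aleph0.mpr ⟨hβ, Cardinal.one_lt_aleph0.le⟩
  set ω₁ : Ordinal := (Cardinal.aleph 1).ord with hω₁
  have hcount : ∀ β : Ordinal, β < ω₁ → β.card ≤ Cardinal.aleph0 := by
    intro β hβ
    have := Cardinal.lt_ord.mp hβ
    rw [← Cardinal.succ_aleph0] at this
    exact Order.lt_succ_iff.mp this
  -- the map β ↦ U (succ β)
  have hUget : ∀ β : Set.Iio ω₁,
      ∃ (A : Subcontinua X) (U : Set (Subcontinua X)), U ∈ b ∧ A ∈ U ∧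
        U ⊆ (Mfam X (Order.succ (Order.succ β.1)))ᶜ ∧ A ∈ Mfam X (Order.succ β.1) :=
    fun β => hU (Order.succ β.1) (Order.succ_ne_bot β.1) (hsc β.1 (hcount β.1 β.2))
  choose A U hUb hAU hUsub hAM using hUget
  have hinj : Function.Injective (fun β : Set.Iio ω₁ => (⟨U β, hUb β⟩ : ↥b)) := by
    intro β γ hβγ
    simp only [Subtype.mk_eq_mk] at hβγ
    by_contra hne
    have key : ∀ β γ : Set.Iio ω₁, β.1 < γ.1 → U β ≠ U γ := by
      intro β γ hlt hUeq
      have h1 : Mfam X (Order.succ γ.1) ⊆ Mfam X (Order.succ (Order.succ β.1)) :=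
        Mfam_antitone X (Order.succ_le_succ (Order.succ_le_of_lt hlt))
      have h2 : A γ ∈ Mfam X (Order.succ (Order.succ β.1)) := h1 (hAM γ)
      have h3 : A γ ∈ U β := hUeq ▸ hAU γ
      exact hUsub β h3 h2
    rcases lt_or_gt_of_ne (fun h : β.1 = γ.1 => hne (Subtype.ext h)) with h | h
    · exact key β γ h hβγ
    · exact key γ β h hβγ.symm
  have hcnt : Countable (Set.Iio ω₁) := by
    have : Countable ↥b := hbc.to_subtype
    exact hinj.countable
  rw [← Cardinal.mk_le_aleph0_iff, Ordinal.mk_Iio_ordinal, Cardinal.lift_le_aleph0,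
    Cardinal.card_ord] at hcnt
  exact absurd hcnt (Cardinal.aleph0_lt_aleph_one.not_ge)

theorem not_countable_nat_bool : ¬ Countable (ℕ → Bool) := by
  intro h
  have h1 : Cardinal.mk (ℕ → Bool) ≤ Cardinal.aleph0 := Cardinal.mk_le_aleph0
  have h2 : Cardinal.mk (ℕ → Bool) = 2 ^ Cardinal.aleph0 := by
    rw [← Cardinal.mk_nat, ← Cardinal.mk_bool, Cardinal.power_def]
  rw [h2] at h1
  exact absurd (lt_of_lt_of_le (Cardinal.cantor _) h1) (lt_irrefl _)
end Kato

/-- **Kato's characterization.** A continuum `X` is Suslinian iff `M_α = ∅` for some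
countable ordinal `α`. -/
theorem suslinian_iff_Mfam_empty
    (X : Type*) [MetricSpace X] [CompactSpace X] [ConnectedSpace X] [Nonempty X] :
    Suslinian X ↔ ∃ α : Ordinal, α.card ≤ Cardinal.aleph0 ∧ Mfam X α = ∅ := by
  constructor
  · intro hS
    by_contra hcon
    push_neg at hcon
    obtain ⟨α, hα0, hαc, hstab⟩ := Kato.exists_stab X
    set M := Mfam X α with hM
    have hMne : M.Nonempty := hcon α hαc
    have hMsub : M ⊆ tildeOp M := by
      rw [← Kato.Mfam_succ X α hα0, hstab]
    obtain ⟨L, hconn, hnt, hdisj⟩ := Kato.exists_uncountable_family M hMsub hMne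
    set 𝒜 : Set (Set X) := Set.range (fun x : ℕ → Bool => (L x : Set X)) with h𝒜
    have hc : 𝒜.Countable := by
      apply hS
      · rintro A ⟨x, rfl⟩
        exact ⟨(L x).isCompact, hconn x, hnt x⟩
      · rintro _ ⟨x, rfl⟩ _ ⟨y, rfl⟩ hne
        exact hdisj x y (fun h => hne (by rw [h]))
    have hLinj : Function.Injective (fun x : ℕ → Bool => (L x : Set X)) := by
      intro x y hxy
      by_contra hne
      have hd := hdisj x y hne
      have hxy' : (L x : Set X) = (L y : Set X) := hxy
      rw [hxy'] at hd
      exact ((hnt y).nonempty).ne_empty (disjoint_self.mp hd)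
    have : Countable (ℕ → Bool) := by
      haveI := hc.to_subtype
      exact Countable.of_equiv _ (Equiv.ofInjective _ hLinj).symm
    exact Kato.not_countable_nat_bool this
  · rintro ⟨α, hαc, hemp⟩ 𝒜 h𝒜 hp
    by_contra hc
    set 𝒜' : Set (Subcontinua X) := {a : Subcontinua X | (a : Set X) ∈ 𝒜} with h𝒜'
    have hcnt' : 𝒜'.Countable := by
      have := Kato.diff_Mfam_countable 𝒜'
        (fun a ha => (h𝒜 _ ha).2.2)
        (fun a ha b hb hab => hp ha hb (fun h => hab (Kato.subcoe_injective h)))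
        α hαc
      rwa [hemp, Set.diff_empty] at this
    apply hc
    have himg : 𝒜 = (fun a : Subcontinua X => (a : Set X)) '' 𝒜' := by
      ext A
      constructor
      · intro hA
        obtain ⟨hcomp, hco, hnt⟩ := h𝒜 A hA
        exact ⟨⟨⟨⟨A, hcomp⟩, hco.nonempty⟩, hco⟩, hA, rfl⟩
      · rintro ⟨a, ha, rfl⟩
        exact ha
    rw [himg]
    exact hcnt'.image _
end

section
/- Let φ : G → Homeo(X) be a continuous action of a group G on a continuum X, and let G act on the hyperspace C(X) by g·A = φ(g)(A). Then for every ordinal α, the set M_α (defined transfinitely by M₁ = C(X), M_{α+1} = M̃_α, and M_λ = ⋂_{α<λ} M_α for limit ordinals λ) is a G-invariant compact subset of C(X). -/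
open Pointwise Filter Metric Set Topology TopologicalSpace

section Aux

variable {X : Type*} [MetricSpace X]

lemma myHausdorffEdist_ne_top (A B : NonemptyCompacts X) :
    EMetric.hausdorffEdist (A : Set X) (B : Set X) ≠ ⊤ :=
  Metric.hausdorffEdist_ne_top_of_nonempty_of_bounded A.nonempty B.nonempty
    A.isCompact.isBounded B.isCompact.isBounded

lemma myIsClosed_connected_set :
    IsClosed {A : NonemptyCompacts X | IsConnected (A : Set X)} := by
  refine isClosed_of_closure_subset ?_
  intro A hA
  refine ⟨A.nonempty, ?_⟩
  rw [isPreconnected_iff_subset_of_fully_disjoint_closed A.isCompact.isClosed]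
  by_contra h
  push_neg at h
  obtain ⟨u, v, hu, hv, hsub, hdisj, hnu, hnv⟩ := h
  set U : Set X := (A : Set X) ∩ u with hUdef
  set V : Set X := (A : Set X) ∩ v with hVdef
  have hUc : IsCompact U := A.isCompact.inter_right hu
  have hVc : IsCompact V := A.isCompact.inter_right hv
  have hUV : Disjoint U V := hdisj.mono inter_subset_right inter_subset_right
  obtain ⟨δ, hδ, hdisj'⟩ := hUV.exists_thickenings hUc hVc.isClosed
  rw [Metric.mem_closure_iff] at hA
  obtain ⟨B, hB, hAB⟩ := hA δ hδ
  have hdAB : hausdorffDist (A : Set X) (B : Set X) < δ := by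
    rw [NonemptyCompacts.dist_eq] at hAB; exact hAB
  have hne : EMetric.hausdorffEdist (A : Set X) (B : Set X) ≠ ⊤ :=
    myHausdorffEdist_ne_top A B
  have hcover : (B : Set X) ⊆ thickening δ U ∪ thickening δ V := by
    intro x hx
    obtain ⟨y, hy, hxy⟩ := Metric.exists_dist_lt_of_hausdorffDist_lt' hx hdAB hne
    rcases hsub hy with h1 | h1
    · exact Or.inl (Metric.mem_thickening_iff.2 ⟨y, ⟨hy, h1⟩, by rwa [dist_comm]⟩)
    · exact Or.inr (Metric.mem_thickening_iff.2 ⟨y, ⟨hy, h1⟩, by rwa [dist_comm]⟩)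
  have hUn : ((B : Set X) ∩ thickening δ U).Nonempty := by
    obtain ⟨x, hxA⟩ : U.Nonempty := by
      obtain ⟨x, hxA, hxv⟩ := not_subset.1 hnv
      rcases hsub hxA with h1 | h1
      · exact ⟨x, hxA, h1⟩
      · exact absurd h1 hxv
    obtain ⟨y, hy, hxy⟩ := Metric.exists_dist_lt_of_hausdorffDist_lt hxA.1 hdAB hne
    exact ⟨y, hy, Metric.mem_thickening_iff.2 ⟨x, hxA, by rwa [dist_comm]⟩⟩
  have hVn : ((B : Set X) ∩ thickening δ V).Nonempty := by
    obtain ⟨x, hxA⟩ : V.Nonempty := by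
      obtain ⟨x, hxA, hxu⟩ := not_subset.1 hnu
      rcases hsub hxA with h1 | h1
      · exact absurd h1 hxu
      · exact ⟨x, hxA, h1⟩
    obtain ⟨y, hy, hxy⟩ := Metric.exists_dist_lt_of_hausdorffDist_lt hxA.1 hdAB hne
    exact ⟨y, hy, Metric.mem_thickening_iff.2 ⟨x, hxA, by rwa [dist_comm]⟩⟩
  obtain ⟨z, hz⟩ := hB.isPreconnected _ _ isOpen_thickening isOpen_thickening hcover hUn hVn
  exact (hdisj'.le_bot ⟨hz.2.1, hz.2.2⟩ : False)

instance mySubcontinuaCompact [CompactSpace X] : CompactSpace (Subcontinua X) :=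
  isCompact_iff_compactSpace.mp myIsClosed_connected_set.isCompact

lemma mySubcontinua_dist_eq (A B : Subcontinua X) :
    dist A B = hausdorffDist (A : Set X) (B : Set X) := by
  rw [Subtype.dist_eq, NonemptyCompacts.dist_eq]

lemma myIsClosed_tildeOp (M : Set (Subcontinua X)) : IsClosed (tildeOp M) := by
  refine isClosed_of_closure_subset ?_
  intro A hA ε hε k
  rw [Metric.mem_closure_iff] at hA
  obtain ⟨B, hB, hAB⟩ := hA (ε / 2) (half_pos hε)
  obtain ⟨f, h1, h2, h3, h4⟩ := hB (ε / 2) (half_pos hε) k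
  exact ⟨f, h1, h2, h3, fun i =>
    lt_of_le_of_lt (dist_triangle A B (f i)) (by linarith [h4 i])⟩

lemma myActC_dist {G : Type*} [Group G] [CompactSpace X] (φ : G →* (X ≃ₜ X)) (g : G) :
    ∀ ε > (0 : ℝ), ∃ δ > (0 : ℝ), ∀ A B : Subcontinua X, dist A B < δ →
      dist (actC φ g A) (actC φ g B) < ε := by
  intro ε hε
  have huc : UniformContinuous (φ g) :=
    CompactSpace.uniformContinuous_of_continuous (φ g).continuous
  obtain ⟨δ, hδ, H⟩ := Metric.uniformContinuous_iff.mp huc (ε / 2) (half_pos hε)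
  refine ⟨δ, hδ, fun A B hAB => ?_⟩
  have hne : EMetric.hausdorffEdist (A.1 : Set X) (B.1 : Set X) ≠ ⊤ :=
    myHausdorffEdist_ne_top A.1 B.1
  have hdAB : hausdorffDist (A : Set X) (B : Set X) < δ := by
    rwa [mySubcontinua_dist_eq] at hAB
  have h1 : ∀ x ∈ (φ g) '' (A : Set X), ∃ y ∈ (φ g) '' (B : Set X), dist x y ≤ ε / 2 := by
    rintro _ ⟨a, ha, rfl⟩
    obtain ⟨b, hb, hab⟩ := Metric.exists_dist_lt_of_hausdorffDist_lt ha hdAB hne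
    exact ⟨φ g b, mem_image_of_mem _ hb, (H hab).le⟩
  have h2 : ∀ x ∈ (φ g) '' (B : Set X), ∃ y ∈ (φ g) '' (A : Set X), dist x y ≤ ε / 2 := by
    rintro _ ⟨b, hb, rfl⟩
    obtain ⟨a, ha, hab⟩ := Metric.exists_dist_lt_of_hausdorffDist_lt' hb hdAB hne
    exact ⟨φ g a, mem_image_of_mem _ ha, by rw [dist_comm]; exact (H hab).le⟩
  have hle : hausdorffDist ((φ g) '' (A : Set X)) ((φ g) '' (B : Set X)) ≤ ε / 2 :=
    Metric.hausdorffDist_le_of_mem_dist (by positivity) h1 h2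
  calc dist (actC φ g A) (actC φ g B)
      = hausdorffDist ((φ g) '' (A : Set X)) ((φ g) '' (B : Set X)) :=
        mySubcontinua_dist_eq _ _
    _ ≤ ε / 2 := hle
    _ < ε := by linarith

lemma myTildeOp_invariant {G : Type*} [Group G] [CompactSpace X] (φ : G →* (X ≃ₜ X))
    (g : G) {M : Set (Subcontinua X)} (hM : ∀ A ∈ M, actC φ g A ∈ M) :
    ∀ A ∈ tildeOp M, actC φ g A ∈ tildeOp M := by
  intro A hA ε hε k
  obtain ⟨δ, hδ, H⟩ := myActC_dist φ g ε hε
  obtain ⟨f, h1, h2, h3, h4⟩ := hA δ hδ k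
  refine ⟨fun i => actC φ g (f i), fun i => hM _ (h1 i), fun i => ?_, fun i j hij => ?_,
    fun i => H _ _ (h4 i)⟩
  · exact (h2 i).image (φ g).injective
  · exact (Set.disjoint_image_iff (φ g).injective).2 (h3 hij)

lemma myMfam_zero : Mfam X 0 = Set.univ :=
  Ordinal.limitRecOn_zero _ _ _

lemma myMfam_succ (α : Ordinal) :
    Mfam X (Order.succ α) = if α = 0 then Set.univ else tildeOp (Mfam X α) :=
  Ordinal.limitRecOn_succ _ _ _ _

lemma myMfam_limit {o : Ordinal} (h : Order.IsSuccLimit o) :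
    Mfam X o = ⋂ (o' : Ordinal) (_ : o' < o), Mfam X o' :=
  Ordinal.limitRecOn_limit _ _ _ _ h

end Aux

/-- Every `M_α` is a `G`-invariant compact subset of `C(X)` under the induced action. -/
theorem Mfam_isCompact_and_invariant
    {G : Type*} [Group G]
    {X : Type*} [MetricSpace X] [CompactSpace X] [ConnectedSpace X] [Nonempty X]
    (φ : G →* (X ≃ₜ X)) (α : Ordinal) :
    IsCompact (Mfam X α) ∧ ∀ g : G, ∀ A ∈ Mfam X α, actC φ g A ∈ Mfam X α := by
  have key : IsClosed (Mfam X α) ∧ ∀ g : G, ∀ A ∈ Mfam X α, actC φ g A ∈ Mfam X α := by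
    induction α using Ordinal.limitRecOn with
    | zero => rw [myMfam_zero]; exact ⟨isClosed_univ, fun _ _ _ => mem_univ _⟩
    | add_one β ih =>
      rw [Ordinal.add_one_eq_succ, myMfam_succ]
      by_cases hβ : β = 0
      · rw [if_pos hβ]; exact ⟨isClosed_univ, fun _ _ _ => mem_univ _⟩
      · rw [if_neg hβ]
        exact ⟨myIsClosed_tildeOp _,
          fun g => myTildeOp_invariant φ g (fun A hA => ih.2 g A hA)⟩
    | limit o ho ih =>
      rw [myMfam_limit ho]
      refine ⟨isClosed_iInter fun o' => isClosed_iInter fun h => (ih o' h).1, ?_⟩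
      intro g A hA
      rw [mem_iInter₂] at hA ⊢
      exact fun o' h => (ih o' h).2 g A (hA o' h)
  exact ⟨key.1.isCompact, key.2⟩
end

section
/- Let X be a nondegenerate continuum with metric d. Then there exists ε₀ > 0 such that for every ε ∈ (0, ε₀) there exists a family of pairwise disjoint subcontinua of X of cardinality strictly greater than 1/√ε, each of which has diameter at least ε/3. -/
/-!
Fix `a ≠ b`. For `0 ≤ s < t ≤ dist b a`, some subcontinuum of the annulus
`{x | s ≤ dist x a ≤ t}` meets both boundary spheres, so it has diameter at least `t - s`:
otherwise, since the space of components of the annulus is a Stone space, some clopen subset of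
the annulus contains the inner sphere and misses the outer one, and together with the inner ball
it splits `X` into two disjoint nonempty closed sets. The annuli `[k ε / 2, k ε / 2 + ε / 3]`,
`k ≤ ⌊1 / √ε⌋`, are pairwise disjoint and fit below `dist b a` once `ε < min 1 (dist b a ^ 2)`.
-/

open Function Metric Set

theorem exists_isClopen_superset_disjoint_of_disjoint_connectedComponent {Y : Type*}
    [TopologicalSpace Y] [CompactSpace Y] [T2Space Y] {S T : Set Y} (hS : IsClosed S)
    (hT : IsClosed T) (h : ∀ x ∈ S, Disjoint (connectedComponent x) T) :
    ∃ W : Set Y, IsClopen W ∧ S ⊆ W ∧ Disjoint W T := by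
  let π : Y → ConnectedComponents Y := ConnectedComponents.mk
  have hπ : Continuous π := ConnectedComponents.continuous_coe
  have hdisj : π '' S ⊆ (π '' T)ᶜ := by
    rintro _ ⟨x, hx, rfl⟩ ⟨y, hy, hyx⟩
    exact disjoint_left.mp (h x hx) (ConnectedComponents.coe_eq_coe'.mp hyx) hy
  obtain ⟨C, hC, hSC, hCT⟩ := exists_clopen_of_closed_subset_open
    (hS.isCompact.image hπ).isClosed (hT.isCompact.image hπ).isClosed.isOpen_compl hdisj
  exact ⟨π ⁻¹' C, hC.preimage hπ, image_subset_iff.mp hSC,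
    disjoint_left.mpr fun y hyC hyT => hCT hyC (mem_image_of_mem π hyT)⟩

theorem exists_isConnected_subset_preimage_Icc {X α : Type*} [TopologicalSpace X]
    [CompactSpace X] [T2Space X] [ConnectedSpace X] [LinearOrder α] [TopologicalSpace α]
    [OrderClosedTopology α] {f : X → α} (hf : Continuous f) {s t : α} (hst : s < t) {a b : X}
    (ha : f a ≤ s) (hb : t ≤ f b) :
    ∃ K : Set X, IsCompact K ∧ IsConnected K ∧ K ⊆ f ⁻¹' Icc s t ∧
      (∃ x ∈ K, f x = s) ∧ ∃ y ∈ K, f y = t := by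
  set C := f ⁻¹' Icc s t
  have hC : IsClosed C := isClosed_Icc.preimage hf
  have : CompactSpace C := isCompact_iff_compactSpace.mp hC.isCompact
  have hfC : Continuous fun z : C => f z := hf.comp continuous_subtype_val
  obtain ⟨x, hxs, hxt⟩ : ∃ x : C, f x = s ∧ ¬Disjoint (connectedComponent x) {z | f z = t} := by
    by_contra! H
    obtain ⟨W, hW, hSW, hWT⟩ := exists_isClopen_superset_disjoint_of_disjoint_connectedComponent
      (isClosed_eq hfC continuous_const) (isClosed_eq hfC continuous_const) H
    have hcover : univ ⊆ (f ⁻¹' Iic s ∪ (↑) '' W) ∪ (f ⁻¹' Ici t ∪ (↑) '' Wᶜ) := by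
      intro z _
      rcases le_or_gt (f z) s with hzs | hzs
      · exact Or.inl (Or.inl hzs)
      rcases le_or_gt t (f z) with hzt | hzt
      · exact Or.inr (Or.inl hzt)
      by_cases hzW : (⟨z, hzs.le, hzt.le⟩ : C) ∈ W
      · exact Or.inl (Or.inr ⟨_, hzW, rfl⟩)
      · exact Or.inr (Or.inr ⟨_, hzW, rfl⟩)
    have hdisj : Disjoint (f ⁻¹' Iic s ∪ (↑) '' W) (f ⁻¹' Ici t ∪ (↑) '' Wᶜ) := by
      rw [disjoint_left]
      rintro _ (hzs | ⟨z, hzW, rfl⟩) (hzt | ⟨w, hwW, hwz⟩)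
      · exact (hst.trans_le hzt).not_ge hzs
      · subst hwz
        exact hwW (hSW (le_antisymm hzs w.2.1))
      · exact disjoint_left.mp hWT hzW (le_antisymm z.2.2 hzt)
      · exact hwW (Subtype.val_injective hwz ▸ hzW)
    obtain ⟨z, -, hzA, hzB⟩ := isPreconnected_closed_iff.mp isPreconnected_univ _ _
      ((isClosed_Iic.preimage hf).union (hC.isClosedMap_subtype_val W hW.isClosed))
      ((isClosed_Ici.preimage hf).union (hC.isClosedMap_subtype_val _ hW.compl.isClosed))
      hcover ⟨a, trivial, Or.inl ha⟩ ⟨b, trivial, Or.inl hb⟩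
    exact disjoint_left.mp hdisj hzA hzB
  obtain ⟨y, hyx, hyt⟩ := not_disjoint_iff.mp hxt
  exact ⟨(↑) '' connectedComponent x,
    isClosed_connectedComponent.isCompact.image continuous_subtype_val,
    isConnected_connectedComponent.image _ continuous_subtype_val.continuousOn,
    image_subset_iff.mpr fun z _ => z.2,
    ⟨x, mem_image_of_mem _ mem_connectedComponent, hxs⟩, ⟨y, mem_image_of_mem _ hyx, hyt⟩⟩

theorem exists_isConnected_subset_closedBall_diff_ball {X : Type*} [MetricSpace X]
    [CompactSpace X] [ConnectedSpace X] (a b : X) {s t : ℝ} (hs : 0 ≤ s) (hst : s < t)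
    (ht : t ≤ dist b a) :
    ∃ K : Set X, IsCompact K ∧ IsConnected K ∧ K ⊆ closedBall a t \ ball a s ∧
      t - s ≤ diam K := by
  obtain ⟨K, hKc, hK, hKsub, ⟨x, hxK, hx⟩, ⟨y, hyK, hy⟩⟩ :=
    exists_isConnected_subset_preimage_Icc (f := (dist · a))
      (continuous_id.dist continuous_const) hst (a := a) (by simpa using hs) ht
  refine ⟨K, hKc, hK, fun z hz => ⟨(hKsub hz).2, (hKsub hz).1.not_gt⟩, ?_⟩
  calc t - s = dist y a - dist x a := by rw [hx, hy]
    _ ≤ dist y x := le_of_abs_le (abs_dist_sub_le y x a)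
    _ ≤ diam K := dist_le_diam_of_mem hKc.isBounded hyK hxK

theorem exists_pairwise_disjoint_subcontinua_of_le_dist {X : Type*} [MetricSpace X]
    [CompactSpace X] [ConnectedSpace X] (a b : X) (n : ℕ) {δ w : ℝ} (hw : 0 < w) (hwδ : w < δ)
    (hD : n * δ + w ≤ dist b a) :
    ∃ 𝒜 : Set (Set X), 𝒜.Finite ∧ 𝒜.ncard = n + 1 ∧
      (∀ A ∈ 𝒜, IsCompact A ∧ IsConnected A ∧ w ≤ diam A) ∧ 𝒜.Pairwise Disjoint := by
  have hδ : 0 < δ := hw.trans hwδ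
  have hannuli : ∀ i : Fin (n + 1), ∃ K : Set X, IsCompact K ∧ IsConnected K ∧
      K ⊆ closedBall a (i * δ + w) \ ball a (i * δ) ∧ w ≤ diam K := fun i => by
    have hi : (i : ℝ) ≤ n := by exact_mod_cast Nat.lt_succ_iff.mp i.isLt
    simpa using exists_isConnected_subset_closedBall_diff_ball a b (by positivity)
      (lt_add_of_pos_right _ hw) (by nlinarith)
  choose K hKc hK hKsub hKdiam using hannuli
  have hdisj : Pairwise (Disjoint on K) := (pairwise_disjoint_on K).mpr fun i j hij => by
    have hij' : (i : ℝ) + 1 ≤ j := by exact_mod_cast hij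
    have hball : closedBall a (i * δ + w) ⊆ ball a (j * δ) :=
      closedBall_subset_ball (by nlinarith)
    exact disjoint_left.mpr fun z hzi hzj => (hKsub j hzj).2 (hball (hKsub i hzi).1)
  have hinj : Injective K := fun i j hij =>
    by_contra fun hne =>
    (hK i).nonempty.ne_empty (disjoint_self.mp ((hdisj hne).mono_right hij.le))
  refine ⟨range K, finite_range K, by simp [ncard_range_of_injective hinj], ?_,
    hdisj.range_pairwise⟩
  rintro _ ⟨i, rfl⟩
  exact ⟨hKc i, hK i, hKdiam i⟩

/-- In a nondegenerate continuum, for all small `ε` there are more than `1/√ε` pairwise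
disjoint subcontinua of diameter at least `ε/3`. -/
theorem exists_many_disjoint_subcontinua
    {X : Type*} [MetricSpace X] [CompactSpace X] [ConnectedSpace X] [Nontrivial X] :
    ∃ ε₀ > (0 : ℝ), ∀ ε ∈ Set.Ioo (0 : ℝ) ε₀, ∃ 𝒜 : Set (Set X), 𝒜.Finite ∧
      1 / Real.sqrt ε < (𝒜.ncard : ℝ) ∧
      (∀ A ∈ 𝒜, IsCompact A ∧ IsConnected A ∧ ε / 3 ≤ Metric.diam A) ∧
      𝒜.Pairwise Disjoint := by
  obtain ⟨a, b, hab⟩ := exists_pair_ne X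
  have hD : 0 < dist b a := dist_pos.mpr hab.symm
  refine ⟨min 1 (dist b a ^ 2), by positivity, fun ε ⟨hε, hεε₀⟩ => ?_⟩
  have hε1 : ε < 1 := hεε₀.trans_le (min_le_left _ _)
  have hsqrt_lt : √ε < dist b a := (Real.sqrt_lt' hD).mpr (hεε₀.trans_le (min_le_right _ _))
  have hε_le_sqrt : ε ≤ √ε := by nlinarith [Real.sq_sqrt hε.le, Real.sqrt_nonneg ε]
  set n := ⌊1 / √ε⌋₊
  have hnε : n * ε ≤ √ε := by
    calc n * ε ≤ 1 / √ε * ε := by gcongr; exact Nat.floor_le (by positivity)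
      _ = √ε := by rw [one_div, inv_mul_eq_div, Real.div_sqrt]
  obtain ⟨𝒜, h𝒜fin, h𝒜card, h𝒜, h𝒜disj⟩ :=
    exists_pairwise_disjoint_subcontinua_of_le_dist a b n (δ := ε / 2) (w := ε / 3)
      (by positivity) (by linarith) (by linarith)
  refine ⟨𝒜, h𝒜fin, ?_, h𝒜, h𝒜disj⟩
  rw [h𝒜card]
  exact_mod_cast Nat.lt_floor_add_one _
end

section
/- Let X be a compact metric space and let U, V be open subsets of X with cl(V) ⊆ U. If A is a subcontinuum of X such that A ∩ V ≠ ∅ and A \ cl(U) ≠ ∅, then there is a subcontinuum B of A ∩ cl(U) such that B ∩ V ≠ ∅ and B ∩ Bd(U) ≠ ∅. -/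
open Set

/-- Boundary lemma: if a subcontinuum `A` meets `V` and leaves `cl U` (where `cl V ⊆ U`),
then some subcontinuum `B ⊆ A ∩ cl U` meets both `V` and the boundary of `U`. -/
theorem exists_subcontinuum_meeting_boundary
    {X : Type*} [MetricSpace X] [CompactSpace X] (U V : Set X)
    (hU : IsOpen U) (hV : IsOpen V) (hVU : closure V ⊆ U)
    (A : Set X) (hAc : IsCompact A) (hAconn : IsConnected A)
    (hAV : (A ∩ V).Nonempty) (hAU : (A \ closure U).Nonempty) :
    ∃ B : Set X, B ⊆ A ∩ closure U ∧ IsCompact B ∧ IsConnected B ∧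
      (B ∩ V).Nonempty ∧ (B ∩ frontier U).Nonempty := by
  obtain ⟨x, hxA, hxV⟩ := hAV
  have hxU : x ∈ U := hVU (subset_closure hxV)
  set K : Set X := A ∩ closure U with hKdef
  have hKc : IsCompact K := hAc.inter_right isClosed_closure
  have hxK : x ∈ K := ⟨hxA, subset_closure hxU⟩
  haveI : CompactSpace K := isCompact_iff_compactSpace.mp hKc
  set x' : K := ⟨x, hxK⟩ with hx'def
  have himg : connectedComponentIn K x = Subtype.val '' connectedComponent x' :=
    connectedComponentIn_eq_image hxK
  refine ⟨connectedComponentIn K x, connectedComponentIn_subset K x, ?_, ?_,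
    ⟨x, mem_connectedComponentIn hxK, hxV⟩, ?_⟩
  · rw [himg]
    exact (isClosed_connectedComponent.isCompact).image continuous_subtype_val
  · exact isConnected_connectedComponentIn_iff.mpr hxK
  · by_contra h
    rw [Set.not_nonempty_iff_eq_empty] at h
    -- pass to the subtype K
    set F : Set K := Subtype.val ⁻¹' (frontier U) with hFdef
    have hFc : IsCompact F := (isClosed_frontier.preimage continuous_subtype_val).isCompact
    have hdisj : F ∩ ⋂ s : { s : Set K // IsClopen s ∧ x' ∈ s }, (s : Set K) = ∅ := by
      rw [← connectedComponent_eq_iInter_isClopen x']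
      ext c
      simp only [mem_inter_iff, mem_empty_iff_false, iff_false, not_and]
      intro hcF hcc
      have : (c : X) ∈ connectedComponentIn K x ∩ frontier U := by
        rw [himg]
        exact ⟨mem_image_of_mem _ hcc, hcF⟩
      rw [h] at this
      exact this
    obtain ⟨t, ht⟩ := hFc.elim_finite_subfamily_closed
      (fun s : { s : Set K // IsClopen s ∧ x' ∈ s } => (s : Set K))
      (fun s => s.2.1.1) (by rw [hdisj])
    set C : Set K := ⋂ s ∈ t, (s : Set K) with hCdef
    have hCclopen : IsClopen C := isClopen_biInter_finset fun s _ => s.2.1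
    have hxC : x' ∈ C := mem_iInter₂.mpr fun s _ => s.2.2
    have hCF : C ∩ F = ∅ := by
      rw [← ht]; ext c; simp [hCdef, and_comm]
    -- C is open in K: get an open set O in X
    obtain ⟨O, hO, hOC⟩ := isOpen_induced_iff.mp hCclopen.2
    -- C' = image of C in X
    set C' : Set X := Subtype.val '' C with hC'def
    have hC'K : C' ⊆ K := by rintro _ ⟨c, _, rfl⟩; exact c.2
    have hC'U : C' ⊆ U := by
      rintro _ ⟨c, hc, rfl⟩
      have hcl : (c : X) ∈ closure U := c.2.2
      have hnf : (c : X) ∉ frontier U := by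
        intro hf
        have : c ∈ C ∩ F := ⟨hc, hf⟩
        rw [hCF] at this; exact this
      rw [hU.frontier_eq] at hnf
      by_contra hcu
      exact hnf ⟨hcl, hcu⟩
    have hC'eq : C' = A ∩ (O ∩ U) := by
      ext a
      constructor
      · rintro ⟨c, hc, rfl⟩
        refine ⟨c.2.1, ?_, hC'U ⟨c, hc, rfl⟩⟩
        have : c ∈ Subtype.val ⁻¹' O := by rw [hOC]; exact hc
        exact this
      · rintro ⟨haA, haO, haU⟩
        have haK : a ∈ K := ⟨haA, subset_closure haU⟩
        refine ⟨⟨a, haK⟩, ?_, rfl⟩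
        rw [← hOC]; exact haO
    have hC'closed : IsClosed C' := by
      have : IsCompact C' := (hCclopen.1.isCompact).image continuous_subtype_val
      exact this.isClosed
    -- now contradict connectedness of A
    obtain ⟨y, hyAU⟩ := hAU
    have hconn := hAconn.2 (O ∩ U) C'ᶜ (hO.inter hU) hC'closed.isOpen_compl
    have hcover : A ⊆ (O ∩ U) ∪ C'ᶜ := by
      intro a ha
      by_cases hac : a ∈ C'
      · left; rw [hC'eq] at hac; exact hac.2
      · right; exact hac
    have hxC' : x ∈ C' := ⟨x', hxC, rfl⟩
    have h1 : (A ∩ (O ∩ U)).Nonempty := ⟨x, hxA, (hC'eq ▸ hxC').2⟩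
    have h2 : (A ∩ C'ᶜ).Nonempty := by
      refine ⟨y, hyAU.1, fun hyC => hyAU.2 ?_⟩
      exact (hC'K hyC).2
    obtain ⟨a, haA, ⟨haO, haU⟩, haC⟩ := hconn hcover h1 h2
    exact haC (hC'eq ▸ (⟨haA, haO, haU⟩ : a ∈ A ∩ (O ∩ U)))
end

section
/- Let X be a set and ρ a nonnegative real-valued function on X × X satisfying: (1) ρ(x,y) = ρ(y,x) for all x, y ∈ X; (2) ρ(x,y) = 0 if and only if x = y; (3) ρ(x,z) ≤ 2·max{ρ(x,y), ρ(y,z)} for all x, y, z ∈ X. Then there exists a distance function D on X (a metric) satisfying (1/4)·ρ(x,y) ≤ D(x,y) ≤ ρ(x,y) for all x, y ∈ X. -/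
/-!
Take for `D` the largest pseudometric below `ρ`, the infimum of `∑ ρ(xᵢ, xᵢ₊₁)` over chains from
`x` to `y` (`PseudoMetricSpace.ofPreNNDist`), so that only `ρ ≤ 4 D` needs proof. By strong
induction on the length of a chain `x₀, …, xₙ` one shows the sharper bound
`ρ(x, y) ≤ 2 ρ(x, x₀) + 4 ∑ ρ(xᵢ, xᵢ₊₁) + 2 ρ(xₙ, y) =: T`: the inductive bounds for
`ρ(x, xₖ₊₁)` and `ρ(xₖ, y)` add up to `T`, so a discrete intermediate value argument yields a
vertex `xₖ` with `ρ(x, xₖ), ρ(xₖ, y) ≤ T / 2`, and the quasi-ultrametric inequality at `xₖ`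
closes the induction.
-/

open scoped NNReal

theorem exists_le_and_le_of_succ_add_le {α : Type*} [AddCommGroup α] [LinearOrder α]
    [IsOrderedAddMonoid α] {u v : ℕ → α} {c : α} {i j : ℕ} (hij : i ≤ j) (hu : u i ≤ c)
    (hv : v j ≤ c) (huv : ∀ k, i ≤ k → k < j → u (k + 1) + v k ≤ c + c) :
    ∃ k, i ≤ k ∧ k ≤ j ∧ u k ≤ c ∧ v k ≤ c := by
  induction j, hij using Nat.le_induction with
  | base => exact ⟨i, le_rfl, le_rfl, hu, hv⟩
  | succ j hij ih =>
    by_cases hj : u (j + 1) ≤ c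
    · exact ⟨j + 1, by omega, le_rfl, hj, hv⟩
    have hvj : v j ≤ c := by
      by_contra! hvj
      exact (huv j hij (by omega)).not_gt (add_lt_add (not_le.mp hj) hvj)
    obtain ⟨k, hik, hkj, hk⟩ := ih hvj fun k hik hkj => huv k hik (by omega)
    exact ⟨k, hik, by omega, hk⟩

section Chain

variable {X : Type*}

noncomputable def chainLength (ρ : X → X → ℝ) (f : ℕ → X) (i j : ℕ) : ℝ :=
  ∑ k ∈ Finset.Ico i j, ρ (f k) (f (k + 1))

variable {ρ : X → X → ℝ}

theorem chainLength_nonneg (hnonneg : ∀ x y, 0 ≤ ρ x y) (f : ℕ → X) (i j : ℕ) :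
    0 ≤ chainLength ρ f i j :=
  Finset.sum_nonneg fun _ _ => hnonneg _ _

theorem chainLength_eq_add_add (f : ℕ → X) {i k j : ℕ} (hik : i ≤ k) (hkj : k < j) :
    chainLength ρ f i j =
      chainLength ρ f i k + ρ (f k) (f (k + 1)) + chainLength ρ f (k + 1) j := by
  rw [chainLength, ← Finset.sum_Ico_consecutive _ hik hkj.le,
    Finset.sum_eq_sum_Ico_succ_bot hkj, add_assoc]
  rfl

theorem le_two_mul_add_four_mul_chainLength_add_two_mul (hnonneg : ∀ x y, 0 ≤ ρ x y)
    (hquasi : ∀ x y z, ρ x z ≤ 2 * max (ρ x y) (ρ y z)) (f : ℕ → X) {i j : ℕ} (hij : i ≤ j)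
    (x y : X) :
    ρ x y ≤ 2 * ρ x (f i) + 4 * chainLength ρ f i j + 2 * ρ (f j) y := by
  induction hn : j - i using Nat.strong_induction_on generalizing i j x y with
  | _ n ih =>
  set T := 2 * ρ x (f i) + 4 * chainLength ρ f i j + 2 * ρ (f j) y
  have hchain := chainLength_nonneg hnonneg f i j
  have hsplit : ∀ k, i ≤ k → k < j → ρ x (f (k + 1)) + ρ (f k) y ≤ T / 2 + T / 2 := by
    intro k hik hkj
    have hleft := ih (k - i) (by omega) hik x (f (k + 1)) rfl
    have hright := ih (j - (k + 1)) (by omega) (i := k + 1) hkj (f k) y rfl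
    have hsum := chainLength_eq_add_add (ρ := ρ) f hik hkj
    linarith
  obtain ⟨k, -, -, hxk, hky⟩ := exists_le_and_le_of_succ_add_le (u := fun k => ρ x (f k))
    (v := fun k => ρ (f k) y) hij (by linarith [hnonneg (f j) y])
    (by linarith [hnonneg x (f i)]) hsplit
  calc ρ x y ≤ 2 * max (ρ x (f k)) (ρ (f k) y) := hquasi _ _ _
    _ ≤ T := by linarith [max_le hxk hky]

theorem le_four_mul_chainLength (hnonneg : ∀ x y, 0 ≤ ρ x y) (hzero : ∀ x, ρ x x = 0)
    (hquasi : ∀ x y z, ρ x z ≤ 2 * max (ρ x y) (ρ y z)) (f : ℕ → X) {i j : ℕ} (hij : i ≤ j) :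
    ρ (f i) (f j) ≤ 4 * chainLength ρ f i j := by
  simpa [hzero] using
    le_two_mul_add_four_mul_chainLength_add_two_mul hnonneg hquasi f hij (f i) (f j)

end Chain

theorem List.exists_sum_zipWith_cons_append_singleton {X M : Type*} [AddCommMonoid M]
    (d : X → X → M) (x y : X) (l : List X) :
    ∃ f : ℕ → X, f 0 = x ∧ f (l.length + 1) = y ∧
      ((x :: l).zipWith d (l ++ [y])).sum =
        ∑ k ∈ Finset.range (l.length + 1), d (f k) (f (k + 1)) := by
  induction l generalizing x with
  | nil => exact ⟨fun k => if k = 0 then x else y, by simp, by simp, by simp⟩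
  | cons a l ih =>
    obtain ⟨g, hg0, hgy, hsum⟩ := ih a
    refine ⟨fun | 0 => x | k + 1 => g k, rfl, hgy, ?_⟩
    subst hg0
    rw [Finset.sum_range_succ']
    simp [hsum, add_comm]

theorem PseudoMetricSpace.le_four_mul_dist_ofPreNNDist {X : Type*} (d : X → X → ℝ≥0)
    (dist_self : ∀ x, d x x = 0) (dist_comm : ∀ x y, d x y = d y x)
    (hd : ∀ x y z, d x z ≤ 2 * max (d x y) (d y z)) (x y : X) :
    ↑(d x y) ≤ 4 * @dist X
      (@PseudoMetricSpace.toDist X (PseudoMetricSpace.ofPreNNDist d dist_self dist_comm)) x y := by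
  rw [dist_ofPreNNDist, ← NNReal.coe_ofNat, ← NNReal.coe_mul, NNReal.mul_iInf, NNReal.coe_le_coe]
  refine le_ciInf fun l => ?_
  obtain ⟨f, rfl, rfl, hsum⟩ := List.exists_sum_zipWith_cons_append_singleton d x y l
  rw [hsum, ← NNReal.coe_le_coe, NNReal.coe_mul, NNReal.coe_sum, Finset.range_eq_Ico]
  exact le_four_mul_chainLength (fun _ _ => NNReal.coe_nonneg _)
    (fun x => by rw [dist_self, NNReal.coe_zero])
    (fun x y z => by exact_mod_cast hd x y z) f (Nat.zero_le _)

/-- **Frink's metrization lemma.** If a nonnegative symmetric function `ρ` vanishes exactly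
on the diagonal and satisfies `ρ(x,z) ≤ 2 max{ρ(x,y), ρ(y,z)}`, then there is a metric `D`
with `ρ/4 ≤ D ≤ ρ`. -/
theorem frink_metrization
    {X : Type*} (ρ : X → X → ℝ) (hnonneg : ∀ x y, 0 ≤ ρ x y)
    (hsymm : ∀ x y, ρ x y = ρ y x) (heq : ∀ x y, ρ x y = 0 ↔ x = y)
    (hquasi : ∀ x y z, ρ x z ≤ 2 * max (ρ x y) (ρ y z)) :
    ∃ D : X → X → ℝ, (∀ x y, 0 ≤ D x y) ∧ (∀ x y, D x y = D y x) ∧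
      (∀ x y, D x y = 0 ↔ x = y) ∧ (∀ x y z, D x z ≤ D x y + D y z) ∧
      ∀ x y, ρ x y / 4 ≤ D x y ∧ D x y ≤ ρ x y := by
  let d : X → X → ℝ≥0 := fun x y => ⟨ρ x y, hnonneg x y⟩
  have hd_self : ∀ x, d x x = 0 := fun x => NNReal.eq ((heq x x).2 rfl)
  have hd_comm : ∀ x y, d x y = d y x := fun x y => NNReal.eq (hsymm x y)
  have hd_quasi : ∀ x y z, d x z ≤ 2 * max (d x y) (d y z) := fun x y z => by
    rw [← NNReal.coe_le_coe, NNReal.coe_mul, NNReal.coe_max]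
    exact hquasi x y z
  let _ := PseudoMetricSpace.ofPreNNDist d hd_self hd_comm
  have hlower : ∀ x y, ρ x y ≤ 4 * dist x y :=
    PseudoMetricSpace.le_four_mul_dist_ofPreNNDist d hd_self hd_comm hd_quasi
  refine ⟨dist, fun _ _ => dist_nonneg, dist_comm, fun x y => ⟨fun h => (heq x y).1 ?_,
    fun h => h ▸ dist_self x⟩, dist_triangle, fun x y => ⟨by linarith [hlower x y],
    PseudoMetricSpace.dist_ofPreNNDist_le d hd_self hd_comm x y⟩⟩
  linarith [hlower x y, hnonneg x y]
end
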